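/- arXiv:1702.03578 — 13 statements merged into one kernel-verified Lean document; each statement's English description precedes it below -/
import Mathlib

section
/- Potential outcomes (Y_i)_{i=1}^n satisfy the Neighborhood Interference Assumption (NIA) for a network g if and only if there exist real numbers α_i, β_i and functions Γ_i, Δ_i from the set of treatment vectors of unit i's neighbors {0,1}^{N_i} to ℝ with Γ_i(0) = 0 and Δ_i(0) = 0, such that for every unit i and every allocation z, Y_i(z) = α_i + β_i z_i + Γ_i(z_{N_i}) + z_i Δ_i(z_{N_i}), where z_{N_i} denotes the restriction of z to the neighborhood N_i. -/
/-!
Under NIA the outcome of unit `i` is a function `h (z i) (z|N_i)` of its own treatment and its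
neighbours' treatments. Any function `h : Bool → W → R` is its two-way decomposition around a
base point `w₀`: the intercept `h false w₀`, the main effects of `b` and of `w`, and their
interaction. Taking `w₀` to be the all-control neighbourhood makes both effects of `w` vanish
there.
-/

open Function

section
variable {ι α β R : Type*}

theorem dependsOn_or_eq_iff_exists_factor [Inhabited α] (N : ι → Prop) (i : ι)
    (f : (ι → α) → β) :
    DependsOn f {j | N j ∨ j = i} ↔
      ∃ h : α → ({j // N j} → α) → β, ∀ z, f z = h (z i) (fun j => z j) := by
  classical
  constructor
  · intro hf
    let extend (a : α) (w : {j // N j} → α) : ι → α :=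
      update (fun j => if hj : N j then w ⟨j, hj⟩ else default) i a
    refine ⟨fun a w => f (extend a w), fun z => ?_⟩
    refine hf fun j hj => ?_
    by_cases hji : j = i
    · subst hji; simp [extend]
    · simp [extend, update_of_ne hji, hj.resolve_right hji]
  · rintro ⟨h, hh⟩ z z' hzz
    rw [hh, hh, hzz i (Or.inr rfl)]
    congr 1
    exact funext fun j => hzz j (Or.inl j.2)

theorem bool_two_way_decomposition [CommRing R] {W : Type*} (h : Bool → W → R) (w₀ : W)
    (b : Bool) (w : W) :
    h b w = h false w₀ + (h true w₀ - h false w₀) * (if b then 1 else 0)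
      + (h false w - h false w₀)
      + (if b then 1 else 0) * (h true w - h false w - (h true w₀ - h false w₀)) := by
  cases b <;> simp only [Bool.false_eq_true, if_true, if_false] <;> ring

theorem dependsOn_iff_exists_interaction_decomposition [CommRing R] (N : ι → Prop) (i : ι)
    (f : (ι → Bool) → R) :
    DependsOn f {j | N j ∨ j = i} ↔
      ∃ (α β : R) (Γ Δ : ({j // N j} → Bool) → R),
        Γ (fun _ => false) = 0 ∧ Δ (fun _ => false) = 0 ∧
        ∀ z, f z = α + β * (if z i then 1 else 0) + Γ (fun j => z j)
          + (if z i then 1 else 0) * Δ (fun j => z j) := by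
  rw [dependsOn_or_eq_iff_exists_factor]
  constructor
  · rintro ⟨h, hh⟩
    let w₀ : {j // N j} → Bool := fun _ => false
    exact ⟨h false w₀, h true w₀ - h false w₀, fun w => h false w - h false w₀,
      fun w => h true w - h false w - (h true w₀ - h false w₀), sub_self _, sub_self _,
      fun z => (hh z).trans (bool_two_way_decomposition h w₀ _ _)⟩
  · rintro ⟨α, β, Γ, Δ, -, -, hf⟩
    exact ⟨fun b w => α + β * (if b then 1 else 0) + Γ w + (if b then 1 else 0) * Δ w, hf⟩

end

theorem stmt_0_general (n : ℕ)
    (g : Fin n → Fin n → Bool)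
    (Y : Fin n → (Fin n → Bool) → ℝ) :
    (∀ (i : Fin n) (z z' : Fin n → Bool),
        (∀ j, (g j i = true ∨ j = i) → z j = z' j) → Y i z = Y i z')
    ↔
    (∃ (α β : Fin n → ℝ)
        (Γ Δ : ∀ i : Fin n, ({j : Fin n // g j i = true} → Bool) → ℝ),
      (∀ i, Γ i (fun _ => false) = 0) ∧
      (∀ i, Δ i (fun _ => false) = 0) ∧
      (∀ (i : Fin n) (z : Fin n → Bool),
        Y i z = α i + β i * (if z i then (1 : ℝ) else 0)
          + Γ i (fun j => z j.1)
          + (if z i then (1 : ℝ) else 0) * Δ i (fun j => z j.1))) := by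
  calc _ ↔ ∀ i, DependsOn (Y i) {j | g j i = true ∨ j = i} := Iff.rfl
    _ ↔ _ := forall_congr' fun i => dependsOn_iff_exists_interaction_decomposition _ i (Y i)
    _ ↔ _ := by simp only [Classical.skolem, forall_and]

/-- Potential outcomes satisfy NIA for the network `g` iff they admit
the parameterization `Y_i(z) = α_i + β_i z_i + Γ_i(z_{N_i}) + z_i Δ_i(z_{N_i})`
with `Γ_i(0) = Δ_i(0) = 0`. -/
theorem stmt_0 (n : ℕ) (hn : 1 ≤ n)
    (g : Fin n → Fin n → Bool) (hg : ∀ i, g i i = false)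
    (Y : Fin n → (Fin n → Bool) → ℝ) :
    (∀ (i : Fin n) (z z' : Fin n → Bool),
        (∀ j, (g j i = true ∨ j = i) → z j = z' j) → Y i z = Y i z')
    ↔
    (∃ (α β : Fin n → ℝ)
        (Γ Δ : ∀ i : Fin n, ({j : Fin n // g j i = true} → Bool) → ℝ),
      (∀ i, Γ i (fun _ => false) = 0) ∧
      (∀ i, Δ i (fun _ => false) = 0) ∧
      (∀ (i : Fin n) (z : Fin n → Bool),
        Y i z = α i + β i * (if z i then (1 : ℝ) else 0)
          + Γ i (fun j => z j.1)
          + (if z i then (1 : ℝ) else 0) * Δ i (fun j => z j.1))) :=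
  stmt_0_general n g Y
end

section
/- Suppose the potential outcomes satisfy Y_i(z) = α_i + β_i z_i + γ_i d_i^z for all units i and allocations z (for some reals α_i, β_i, γ_i), and suppose interference effects are symmetrically sent: for every unit j, every allocation z with z_j = 0, and all units i, i′ with g_ji = g_ji′ = 1, one has Y_i(z + e_j) − Y_i(z) = Y_{i′}(z + e_j) − Y_{i′}(z). Define the undirected graph h on [n] by h_{ii′} = 1 if and only if (gᵀg)_{ii′} > 0, i.e., units i and i′ share a common in-neighbor. Then γ_i = γ_{i′} whenever i and i′ lie in the same connected component of h. -/
/-!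
Starting from the empty allocation, treating a single unit `j` raises the treated degree of each
out-neighbour `i` of `j` by one and, since `g` has no loops, leaves `z i` untouched; so the
resulting change in `Y i` is exactly `γ i`. Symmetric sending therefore equates `γ` on the two
ends of every edge of `h`, hence along every path.
-/

open Finset

/-- Treated degree of unit `i` under allocation `z`: the number of treated in-neighbors. -/
def trDeg {n : ℕ} (g : Fin n → Fin n → Bool) (z : Fin n → Bool) (i : Fin n) : ℕ :=
  (Finset.univ.filter fun j => g j i = true ∧ z j = true).card

theorem trDeg_update_of_eq_false {n : ℕ} (g : Fin n → Fin n → Bool) {z : Fin n → Bool}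
    {j : Fin n} (hz : z j = false) (i : Fin n) :
    trDeg g (Function.update z j true) i = trDeg g z i + if g j i then 1 else 0 := by
  unfold trDeg
  split_ifs with hji
  · have hfilter : (univ.filter fun k => g k i = true ∧ Function.update z j true k = true)
        = insert j (univ.filter fun k => g k i = true ∧ z k = true) := by
      ext k
      by_cases hk : k = j
      · subst hk; simp [hji]
      · simp [hk]
    rw [hfilter, card_insert_of_notMem (by simp [hz])]
  · rw [add_zero]
    congr 1
    ext k
    by_cases hk : k = j
    · subst hk; simp [hji, hz]
    · simp [Function.update_of_ne hk]

theorem linearModel_update_sub_eq {n : ℕ} {g : Fin n → Fin n → Bool}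
    {Y : Fin n → (Fin n → Bool) → ℝ} {α β γ : Fin n → ℝ}
    (hY : ∀ (i : Fin n) (z : Fin n → Bool),
      Y i z = α i + β i * (if z i then (1 : ℝ) else 0) + γ i * (trDeg g z i : ℝ))
    {z : Fin n → Bool} {i j : Fin n} (hz : z j = false) (hij : i ≠ j) (hji : g j i = true) :
    Y i (Function.update z j true) - Y i z = γ i := by
  rw [hY, hY, trDeg_update_of_eq_false g hz, Function.update_of_ne hij, hji]
  push_cast
  simp only [if_true]
  ring

theorem stmt_1_general (n : ℕ)
    (g : Fin n → Fin n → Bool) (hg : ∀ i, g i i = false)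
    (Y : Fin n → (Fin n → Bool) → ℝ)
    (α β γ : Fin n → ℝ)
    (hY : ∀ (i : Fin n) (z : Fin n → Bool),
      Y i z = α i + β i * (if z i then (1 : ℝ) else 0) + γ i * (trDeg g z i : ℝ))
    (hSSIE : ∀ (j : Fin n) (z : Fin n → Bool), z j = false →
      ∀ (i i' : Fin n), g j i = true → g j i' = true →
        Y i (Function.update z j true) - Y i z
          = Y i' (Function.update z j true) - Y i' z)
    (i i' : Fin n)
    (hconn : Relation.ReflTransGen
      (fun a b : Fin n => ∃ j, g j a = true ∧ g j b = true) i i') :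
    γ i = γ i' := by
  have ne_of_adj : ∀ {j a}, g j a = true → a ≠ j := by
    rintro j a hja rfl
    simp [hg] at hja
  induction hconn with
  | refl => rfl
  | tail _ hstep ih =>
    obtain ⟨j, hja, hjb⟩ := hstep
    have h := hSSIE j (fun _ => false) rfl _ _ hja hjb
    rwa [linearModel_update_sub_eq hY rfl (ne_of_adj hja) hja,
      linearModel_update_sub_eq hY rfl (ne_of_adj hjb) hjb, ← ih] at h

/-- Under the SANASIA-type parameterization
`Y_i(z) = α_i + β_i z_i + γ_i d_i^z` with symmetrically sent interference effects,
the interference coefficients `γ` are constant on connected components of the graph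
`h` where `i ~ i'` iff `i` and `i'` share a common in-neighbor. -/
theorem stmt_1 (n : ℕ) (hn : 1 ≤ n)
    (g : Fin n → Fin n → Bool) (hg : ∀ i, g i i = false)
    (Y : Fin n → (Fin n → Bool) → ℝ)
    (α β γ : Fin n → ℝ)
    (hY : ∀ (i : Fin n) (z : Fin n → Bool),
      Y i z = α i + β i * (if z i then (1 : ℝ) else 0) + γ i * (trDeg g z i : ℝ))
    (hSSIE : ∀ (j : Fin n) (z : Fin n → Bool), z j = false →
      ∀ (i i' : Fin n), g j i = true → g j i' = true →
        Y i (Function.update z j true) - Y i z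
          = Y i' (Function.update z j true) - Y i' z)
    (i i' : Fin n)
    (hconn : Relation.ReflTransGen
      (fun a b : Fin n => ∃ j, g j a = true ∧ g j b = true) i i') :
    γ i = γ i' :=
  stmt_1_general n g hg Y α β γ hY hSSIE i i' hconn
end

section
/- Fix a design p and weights w = (w_i)_{i∈[n]}, w_i : {0,1}^n → ℝ. The linear estimator β̂^w is unbiased for β̄ for every collection of potential outcomes satisfying NIA if and only if for every unit i: (C1) ∑_z p(z) w_i(z) z_i = 1/n; (C2) ∑_z p(z) w_i(z) = 0; (C3) for every nonzero pattern z′ ∈ {0,1}^{N_i} \ {0}, ∑_z p(z) w_i(z) 1{z_{N_i} = z′} = 0; and (C4) for every nonzero pattern z′ ∈ {0,1}^{N_i} \ {0}, ∑_z p(z) w_i(z) z_i 1{z_{N_i} = z′} = 0. -/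
open Finset

/-- The neighborhood interference assumption. -/
def NIA {n : ℕ} (g : Fin n → Fin n → Bool) (Y : Fin n → (Fin n → Bool) → ℝ) : Prop :=
  ∀ (i : Fin n) (z z' : Fin n → Bool),
    (∀ j, (g j i = true ∨ j = i) → z j = z' j) → Y i z = Y i z'

/-- The average direct treatment effect `β̄ = (1/n) ∑ᵢ (Yᵢ(eᵢ) - Yᵢ(0))`. -/
noncomputable def betaBar {n : ℕ} (Y : Fin n → (Fin n → Bool) → ℝ) : ℝ :=
  (1 / (n : ℝ)) * ∑ i, (Y i (fun j => decide (j = i)) - Y i (fun _ => false))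

/-! Under NIA, `Y i z` depends on `z` only through the exposure of unit `i` (its own treatment
and the treatment pattern on `N i`), and every function of the exposures arises this way. The
expected estimate and `β̄` are then linear functionals of an arbitrary vector indexed by pairs
(unit, exposure), so unbiasedness is equality of their coefficient vectors. Since `i ∉ N i`, the
coefficients of `β̄` at unit `i` are `1/n` at (treated, no neighbour treated), `-1/n` at
(untreated, no neighbour treated) and `0` elsewhere; C1–C4 are an invertible recombination of
these equations. -/

lemma Finset.sum_mul_comp_eq_sum_fiberwise {α β : Type*} [Fintype α] [Fintype β] [DecidableEq β]
    (f : α → β) (a : α → ℝ) (φ : β → ℝ) :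
    ∑ z, a z * φ (f z) = ∑ q, (∑ z with f z = q, a z) * φ q := by
  simp_rw [sum_mul]
  rw [← sum_fiberwise univ f fun z => a z * φ (f z)]
  exact sum_congr rfl fun q _ => sum_congr rfl fun z hz => by rw [(mem_filter.1 hz).2]

lemma forall_eq_mul_sub_indicator_iff {σ : Type*} [Fintype σ] [DecidableEq σ]
    (c : Bool × σ → ℝ) (o : σ) (a : ℝ) :
    (∀ q, c q = a * ((if q = (true, o) then 1 else 0) - if q = (false, o) then 1 else 0)) ↔
      ∑ s, c (true, s) = a ∧ ∑ q, c q = 0 ∧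
        (∀ s ≠ o, c (true, s) + c (false, s) = 0) ∧ ∀ s ≠ o, c (true, s) = 0 := by
  have hsum : ∑ q, c q = ∑ s, (c (true, s) + c (false, s)) := by
    rw [Fintype.sum_prod_type, Fintype.sum_bool, sum_add_distrib]
  constructor
  · intro hc
    refine ⟨?_, ?_, fun s hs => ?_, fun s hs => ?_⟩
    · simp [hc]
    · simp [hc, ← mul_sum, sum_sub_distrib]
    · simp [hc, hs]
    · simp [hc, hs]
  · rintro ⟨h1, h2, h3, h4⟩ ⟨b, s⟩
    have htrue : c (true, o) = a := by
      rwa [sum_eq_single o (fun s _ hs => h4 s hs) (by simp)] at h1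
    have hfalse : c (false, o) = -a := by
      rw [hsum, sum_eq_single o (fun s _ hs => h3 s hs) (by simp), htrue] at h2
      linarith
    by_cases hs : s = o
    · subst hs
      cases b <;> simp [htrue, hfalse]
    · have hfalse : c (false, s) = 0 := by linarith [h3 s hs, h4 s hs]
      cases b <;> simp [h4 s hs, hfalse, hs]

section Exposure

variable {n : ℕ} (g : Fin n → Fin n → Bool)

abbrev Exposure (i : Fin n) : Type := Bool × ({j : Fin n // g j i = true} → Bool)

def exposure (i : Fin n) (z : Fin n → Bool) : Exposure g i := (z i, fun j => z j.1)

def allocOfExposure (i : Fin n) (q : Exposure g i) : Fin n → Bool :=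
  fun j => if h : g j i = true then q.2 ⟨j, h⟩ else if j = i then q.1 else false

def exposureOutcomes (y : (Σ i, Exposure g i) → ℝ) : Fin n → (Fin n → Bool) → ℝ :=
  fun i z => y ⟨i, exposure g i z⟩

lemma nia_iff_exists_eq_exposureOutcomes {Y : Fin n → (Fin n → Bool) → ℝ} :
    NIA g Y ↔ ∃ y, Y = exposureOutcomes g y := by
  constructor
  · intro hY
    refine ⟨fun x => Y x.1 (allocOfExposure g x.1 x.2), funext₂ fun i z => hY i _ _ ?_⟩
    rintro j (hj | rfl)
    · simp [allocOfExposure, exposure, hj]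
    · by_cases hj : g j j = true <;> simp [allocOfExposure, exposure, hj]
  · rintro ⟨y, rfl⟩ i z z' hzz'
    exact congrArg (fun q => y ⟨i, q⟩)
      (Prod.ext (hzz' i (Or.inr rfl)) (funext fun j => hzz' j (Or.inl j.2)))

def exposureCoef (p : (Fin n → Bool) → ℝ) (w : Fin n → (Fin n → Bool) → ℝ)
    (x : Σ i, Exposure g i) : ℝ :=
  ∑ z with exposure g x.1 z = x.2, p z * w x.1 z

noncomputable def betaBarCoef (x : Σ i, Exposure g i) : ℝ :=
  (1 / (n : ℝ)) * ((if x.2 = exposure g x.1 (fun j => decide (j = x.1)) then 1 else 0) -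
    if x.2 = exposure g x.1 (fun _ => false) then 1 else 0)

lemma sum_mul_exposureOutcomes (p : (Fin n → Bool) → ℝ) (w : Fin n → (Fin n → Bool) → ℝ)
    (y : (Σ i, Exposure g i) → ℝ) :
    ∑ z, p z * ∑ i, w i z * exposureOutcomes g y i z = exposureCoef g p w ⬝ᵥ y := by
  simp_rw [mul_sum, ← mul_assoc]
  rw [sum_comm, dotProduct, Fintype.sum_sigma]
  exact sum_congr rfl fun i _ => sum_mul_comp_eq_sum_fiberwise _ _ (fun q => y ⟨i, q⟩)

lemma betaBar_exposureOutcomes (y : (Σ i, Exposure g i) → ℝ) :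
    betaBar (exposureOutcomes g y) = betaBarCoef g ⬝ᵥ y := by
  rw [betaBar, dotProduct, Fintype.sum_sigma, mul_sum]
  refine sum_congr rfl fun i _ => ?_
  simp only [betaBarCoef, mul_assoc, ← mul_sum, sub_mul, sum_sub_distrib, ite_mul, one_mul,
    zero_mul, exposureOutcomes]
  rw [sum_ite_eq' univ (exposure g i fun j => decide (j = i)), sum_ite_eq', if_pos (mem_univ _),
    if_pos (mem_univ _)]

end Exposure

lemma exposureCoef_eq_betaBarCoef_iff {n : ℕ} {g : Fin n → Fin n → Bool}
    (hg : ∀ i, g i i = false) (p : (Fin n → Bool) → ℝ) (w : Fin n → (Fin n → Bool) → ℝ)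
    (i : Fin n) :
    (∀ q, exposureCoef g p w ⟨i, q⟩ = betaBarCoef g ⟨i, q⟩) ↔
      (∑ z, p z * w i z * (if z i then (1 : ℝ) else 0)) = 1 / (n : ℝ) ∧
      (∑ z, p z * w i z) = 0 ∧
      (∀ z' : {j : Fin n // g j i = true} → Bool, z' ≠ (fun _ => false) →
        (∑ z, p z * w i z *
          (if (fun j : {j : Fin n // g j i = true} => z j.1) = z' then (1 : ℝ) else 0)) = 0) ∧
      (∀ z' : {j : Fin n // g j i = true} → Bool, z' ≠ (fun _ => false) →
        (∑ z, p z * w i z * (if z i then (1 : ℝ) else 0) *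
          (if (fun j : {j : Fin n // g j i = true} => z j.1) = z' then (1 : ℝ) else 0)) = 0) := by
  set c : Exposure g i → ℝ := fun q => exposureCoef g p w ⟨i, q⟩
  have hsum (φ : Exposure g i → ℝ) : ∑ z, p z * w i z * φ (exposure g i z) = ∑ q, c q * φ q :=
    sum_mul_comp_eq_sum_fiberwise _ _ _
  have hC1 : ∑ z, p z * w i z * (if z i then (1 : ℝ) else 0) = ∑ s, c (true, s) :=
    (hsum fun q => if q.1 then 1 else 0).trans (by simp [Fintype.sum_prod_type])
  have hC2 : ∑ z, p z * w i z = ∑ q, c q := by simpa using hsum fun _ => 1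
  have hC3 (z' : {j : Fin n // g j i = true} → Bool) :
      ∑ z, p z * w i z *
        (if (fun j : {j : Fin n // g j i = true} => z j.1) = z' then (1 : ℝ) else 0) =
      c (true, z') + c (false, z') :=
    (hsum fun q => if q.2 = z' then 1 else 0).trans (by simp [Fintype.sum_prod_type])
  have hC4 (z' : {j : Fin n // g j i = true} → Bool) :
      ∑ z, p z * w i z * (if z i then (1 : ℝ) else 0) *
        (if (fun j : {j : Fin n // g j i = true} => z j.1) = z' then (1 : ℝ) else 0) =
      c (true, z') := by
    simp_rw [mul_assoc _ (if _ then _ else _)]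
    exact (hsum fun q => (if q.1 then 1 else 0) * if q.2 = z' then 1 else 0).trans
      (by simp [Fintype.sum_prod_type])
  have hunit : exposure g i (fun j => decide (j = i)) = (true, fun _ => false) := by
    refine Prod.ext (by simp [exposure]) (funext fun j => ?_)
    have hji : j.1 ≠ i := fun h => by simpa [h, hg] using j.2
    simp [exposure, hji]
  simp only [hC1, hC2, hC3, hC4, betaBarCoef, hunit]
  exact forall_eq_mul_sub_indicator_iff c _ _

theorem stmt_2_general (n : ℕ)
    (g : Fin n → Fin n → Bool) (hg : ∀ i, g i i = false)
    (p : (Fin n → Bool) → ℝ)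
    (w : Fin n → (Fin n → Bool) → ℝ) :
    (∀ Y : Fin n → (Fin n → Bool) → ℝ, NIA g Y →
      ∑ z, p z * ∑ i, w i z * Y i z = betaBar Y)
    ↔
    (∀ i : Fin n,
      -- (C1)
      (∑ z, p z * w i z * (if z i then (1 : ℝ) else 0)) = 1 / (n : ℝ) ∧
      -- (C2)
      (∑ z, p z * w i z) = 0 ∧
      -- (C3)
      (∀ z' : {j : Fin n // g j i = true} → Bool, z' ≠ (fun _ => false) →
        (∑ z, p z * w i z *
          (if (fun j : {j : Fin n // g j i = true} => z j.1) = z' then (1 : ℝ) else 0)) = 0) ∧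
      -- (C4)
      (∀ z' : {j : Fin n // g j i = true} → Bool, z' ≠ (fun _ => false) →
        (∑ z, p z * w i z * (if z i then (1 : ℝ) else 0) *
          (if (fun j : {j : Fin n // g j i = true} => z j.1) = z' then (1 : ℝ) else 0)) = 0)) :=
  calc _ ↔ ∀ y, exposureCoef g p w ⬝ᵥ y = betaBarCoef g ⬝ᵥ y := by
        simp only [nia_iff_exists_eq_exposureOutcomes, forall_exists_index,
          forall_comm (α := Fin n → _), forall_eq, sum_mul_exposureOutcomes,
          betaBar_exposureOutcomes]
    _ ↔ exposureCoef g p w = betaBarCoef g := dotProduct_eq_iff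
    _ ↔ _ := by
        rw [funext_iff, Sigma.forall]
        exact forall_congr' (exposureCoef_eq_betaBarCoef_iff hg p w)

/-- the linear estimator `β̂^w` is unbiased for `β̄` for every collection
of potential outcomes satisfying NIA iff constraints C1-C4 hold for every unit. -/
theorem stmt_2 (n : ℕ) (hn : 1 ≤ n)
    (g : Fin n → Fin n → Bool) (hg : ∀ i, g i i = false)
    (p : (Fin n → Bool) → ℝ) (hp0 : ∀ z, 0 ≤ p z) (hp1 : ∑ z, p z = 1)
    (w : Fin n → (Fin n → Bool) → ℝ) :
    (∀ Y : Fin n → (Fin n → Bool) → ℝ, NIA g Y →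
      ∑ z, p z * ∑ i, w i z * Y i z = betaBar Y)
    ↔
    (∀ i : Fin n,
      -- (C1)
      (∑ z, p z * w i z * (if z i then (1 : ℝ) else 0)) = 1 / (n : ℝ) ∧
      -- (C2)
      (∑ z, p z * w i z) = 0 ∧
      -- (C3)
      (∀ z' : {j : Fin n // g j i = true} → Bool, z' ≠ (fun _ => false) →
        (∑ z, p z * w i z *
          (if (fun j : {j : Fin n // g j i = true} => z j.1) = z' then (1 : ℝ) else 0)) = 0) ∧
      -- (C4)
      (∀ z' : {j : Fin n // g j i = true} → Bool, z' ≠ (fun _ => false) →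
        (∑ z, p z * w i z * (if z i then (1 : ℝ) else 0) *
          (if (fun j : {j : Fin n // g j i = true} => z j.1) = z' then (1 : ℝ) else 0)) = 0)) :=
  stmt_2_general n g hg p w
end

section
/- Fix a design p. Linear unbiased estimators of β̄ under NIA exist (i.e., there exist weights w such that β̂^w is unbiased for β̄ for every collection of potential outcomes satisfying NIA) if and only if for each unit i there exist allocations z and z′ with p(z) > 0, p(z′) > 0, d_i^z = d_i^{z′} = 0, z_i = 1, and z′_i = 0. -/
open Finset

/-!
Call an allocation `z` *`b`-exposed* for unit `i` when `i` has no treated neighbour and `zᵢ = b`.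
Under NIA the outcome of `i` is the same at all `b`-exposed allocations, and `eᵢ`, `0` are
`true`-, resp. `false`-exposed. If both exposures have positive probability for every unit, the
Horvitz–Thompson weights `(1/n) (𝟙[true-exposed] / πᵢ(true) - 𝟙[false-exposed] / πᵢ(false))`
are unbiased. Conversely, if `p` vanishes on the `b`-exposed allocations of some unit `i`, the
NIA outcome `Yⱼ(z) = 𝟙[j = i, z is b-exposed for i]` has `β̄ = ±1/n`, while every linear
estimator has mean `0` on it.
-/

variable {n : ℕ} {g : Fin n → Fin n → Bool}

lemma trDeg_eq_zero_iff {z : Fin n → Bool} {i : Fin n} :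
    trDeg g z i = 0 ↔ ∀ j, g j i = true → z j = false := by
  simp [trDeg, Finset.filter_eq_empty_iff]

def Exposed (g : Fin n → Fin n → Bool) (i : Fin n) (b : Bool) (z : Fin n → Bool) : Prop :=
  trDeg g z i = 0 ∧ z i = b

instance (i : Fin n) (b : Bool) (z : Fin n → Bool) : Decidable (Exposed g i b z) :=
  inferInstanceAs (Decidable (_ ∧ _))

lemma exposed_single (hg : ∀ i, g i i = false) (i : Fin n) :
    Exposed g i true (fun j => decide (j = i)) := by
  refine ⟨trDeg_eq_zero_iff.2 fun j hj => ?_, by simp⟩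
  have hji : j ≠ i := by rintro rfl; simp [hg j] at hj
  simp [hji]

lemma exposed_zero (i : Fin n) : Exposed g i false (fun _ => false) :=
  ⟨trDeg_eq_zero_iff.2 fun _ _ => rfl, rfl⟩

lemma exposed_congr {i : Fin n} {b : Bool} {z z' : Fin n → Bool}
    (h : ∀ j, (g j i = true ∨ j = i) → z j = z' j) :
    Exposed g i b z ↔ Exposed g i b z' := by
  have hdeg : trDeg g z i = trDeg g z' i := by
    unfold trDeg
    congr 1
    exact Finset.filter_congr fun j _ => and_congr_right fun hj => by rw [h j (.inl hj)]
  rw [Exposed, Exposed, hdeg, h i (.inr rfl)]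

lemma NIA.apply_eq_of_exposed {Y : Fin n → (Fin n → Bool) → ℝ} (hY : NIA g Y) {i : Fin n}
    {b : Bool} {z z' : Fin n → Bool} (hz : Exposed g i b z) (hz' : Exposed g i b z') :
    Y i z = Y i z' := by
  refine hY i z z' fun j hj => ?_
  rcases hj with hj | rfl
  · rw [trDeg_eq_zero_iff.1 hz.1 j hj, trDeg_eq_zero_iff.1 hz'.1 j hj]
  · rw [hz.2, hz'.2]

noncomputable def exposureIndicator (g : Fin n → Fin n → Bool) (i : Fin n) (b : Bool) :
    Fin n → (Fin n → Bool) → ℝ :=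
  fun j z => if j = i ∧ Exposed g i b z then 1 else 0

lemma nia_exposureIndicator (i : Fin n) (b : Bool) : NIA g (exposureIndicator g i b) := by
  intro j z z' h
  by_cases hj : j = i
  · subst hj
    simp only [exposureIndicator, exposed_congr h]
  · simp [exposureIndicator, hj]

lemma betaBar_exposureIndicator_ne_zero (hg : ∀ i, g i i = false) (i : Fin n) (b : Bool) :
    betaBar (exposureIndicator g i b) ≠ 0 := by
  have hn : (n : ℝ) ≠ 0 := Nat.cast_ne_zero.2 i.pos.ne'
  rw [betaBar, Finset.sum_eq_single i (fun j _ hj => by simp [exposureIndicator, hj])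
    (by simp)]
  cases b
  · have hne : ¬Exposed g i false (fun j => decide (j = i)) := fun h => by simpa using h.2
    simp [exposureIndicator, exposed_zero i, hne, hn]
  · have hne : ¬Exposed g i true (fun _ => false) := fun h => by simpa using h.2
    simp [exposureIndicator, exposed_single hg i, hne, hn]

lemma sum_mul_exposureIndicator (w : Fin n → (Fin n → Bool) → ℝ) (i : Fin n) (b : Bool)
    (z : Fin n → Bool) :
    ∑ j, w j z * exposureIndicator g i b j z = if Exposed g i b z then w i z else 0 := by
  rw [Finset.sum_eq_single i (fun j _ hj => by simp [exposureIndicator, hj])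
    (by simp)]
  simp [exposureIndicator]

lemma exists_pos_exposed_of_unbiased (hg : ∀ i, g i i = false) {p : (Fin n → Bool) → ℝ}
    (hp0 : ∀ z, 0 ≤ p z) {w : Fin n → (Fin n → Bool) → ℝ}
    (hw : ∀ Y, NIA g Y → ∑ z, p z * ∑ i, w i z * Y i z = betaBar Y) (i : Fin n) (b : Bool) :
    ∃ z, 0 < p z ∧ Exposed g i b z := by
  by_contra! hnull
  have hmean : ∑ z, p z * ∑ j, w j z * exposureIndicator g i b j z = 0 := by
    refine Finset.sum_eq_zero fun z _ => ?_
    rw [sum_mul_exposureIndicator]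
    split_ifs with hz
    · rw [le_antisymm (not_lt.1 fun hpos => hnull z hpos hz) (hp0 z), zero_mul]
    · rw [mul_zero]
  exact betaBar_exposureIndicator_ne_zero hg i b <|
    (hw _ (nia_exposureIndicator i b)).symm.trans hmean

section Sufficiency

variable (g) (p : (Fin n → Bool) → ℝ)

noncomputable def exposureProb (i : Fin n) (b : Bool) : ℝ :=
  ∑ z ∈ univ.filter (Exposed g i b), p z

noncomputable def exposureWeight (i : Fin n) (b : Bool) (z : Fin n → Bool) : ℝ :=
  if Exposed g i b z then (exposureProb g p i b)⁻¹ else 0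

noncomputable def htWeight (i : Fin n) (z : Fin n → Bool) : ℝ :=
  (1 / n) * (exposureWeight g p i true z - exposureWeight g p i false z)

variable {g p}

lemma exposureProb_pos (hp0 : ∀ z, 0 ≤ p z) {i : Fin n} {b : Bool} {z : Fin n → Bool}
    (hz : 0 < p z) (hE : Exposed g i b z) : 0 < exposureProb g p i b :=
  Finset.sum_pos' (fun z _ => hp0 z) ⟨z, by simpa using hE, hz⟩

lemma NIA.sum_mul_exposureWeight {Y : Fin n → (Fin n → Bool) → ℝ} (hY : NIA g Y) {i : Fin n}
    {b : Bool} {z₀ : Fin n → Bool} (hz₀ : Exposed g i b z₀) (hπ : exposureProb g p i b ≠ 0) :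
    ∑ z, p z * exposureWeight g p i b z * Y i z = Y i z₀ := by
  calc ∑ z, p z * exposureWeight g p i b z * Y i z
      = ∑ z ∈ univ.filter (Exposed g i b), p z * ((exposureProb g p i b)⁻¹ * Y i z₀) := by
        rw [Finset.sum_filter]
        refine Finset.sum_congr rfl fun z _ => ?_
        unfold exposureWeight
        split_ifs with hz
        · rw [hY.apply_eq_of_exposed hz hz₀]; ring
        · ring
    _ = Y i z₀ := by
        rw [← Finset.sum_mul, ← exposureProb, ← mul_assoc, mul_inv_cancel₀ hπ, one_mul]

lemma NIA.sum_mul_htWeight (hg : ∀ i, g i i = false) {Y : Fin n → (Fin n → Bool) → ℝ}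
    (hY : NIA g Y) (hπ : ∀ i b, exposureProb g p i b ≠ 0) :
    ∑ z, p z * ∑ i, htWeight g p i z * Y i z = betaBar Y := by
  have hunit : ∀ i, ∑ z, p z * (htWeight g p i z * Y i z) =
      1 / n * (Y i (fun j => decide (j = i)) - Y i (fun _ => false)) := fun i => by
    rw [← hY.sum_mul_exposureWeight (exposed_single hg i) (hπ i true),
      ← hY.sum_mul_exposureWeight (exposed_zero i) (hπ i false), ← Finset.sum_sub_distrib,
      Finset.mul_sum]
    exact Finset.sum_congr rfl fun z _ => by rw [htWeight]; ring
  simp only [Finset.mul_sum]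
  rw [Finset.sum_comm, betaBar, Finset.mul_sum]
  exact Finset.sum_congr rfl fun i _ => hunit i

end Sufficiency

theorem stmt_4_general (n : ℕ)
    (g : Fin n → Fin n → Bool) (hg : ∀ i, g i i = false)
    (p : (Fin n → Bool) → ℝ) (hp0 : ∀ z, 0 ≤ p z) :
    (∃ w : Fin n → (Fin n → Bool) → ℝ,
      ∀ Y : Fin n → (Fin n → Bool) → ℝ, NIA g Y →
        ∑ z, p z * ∑ i, w i z * Y i z = betaBar Y)
    ↔
    (∀ i : Fin n, ∃ z z' : Fin n → Bool,
      0 < p z ∧ 0 < p z' ∧ trDeg g z i = 0 ∧ trDeg g z' i = 0 ∧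
      z i = true ∧ z' i = false) := by
  constructor
  · rintro ⟨w, hw⟩ i
    obtain ⟨z, hz, hzd, hzi⟩ := exists_pos_exposed_of_unbiased hg hp0 hw i true
    obtain ⟨z', hz', hzd', hzi'⟩ := exists_pos_exposed_of_unbiased hg hp0 hw i false
    exact ⟨z, z', hz, hz', hzd, hzd', hzi, hzi'⟩
  · intro h
    have hπ : ∀ i b, exposureProb g p i b ≠ 0 := fun i b => by
      obtain ⟨z, z', hz, hz', hzd, hzd', hzi, hzi'⟩ := h i
      cases b
      exacts [(exposureProb_pos hp0 hz' ⟨hzd', hzi'⟩).ne',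
        (exposureProb_pos hp0 hz ⟨hzd, hzi⟩).ne']
    exact ⟨htWeight g p, fun Y hY => hY.sum_mul_htWeight hg hπ⟩

/-- linear unbiased estimators of `β̄` under NIA exist iff for each unit `i`
there are allocations `z, z'` of positive probability with `dᵢ^z = dᵢ^{z'} = 0`,
`zᵢ = 1` and `z'ᵢ = 0`. -/
theorem stmt_4 (n : ℕ) (hn : 1 ≤ n)
    (g : Fin n → Fin n → Bool) (hg : ∀ i, g i i = false)
    (p : (Fin n → Bool) → ℝ) (hp0 : ∀ z, 0 ≤ p z) (hp1 : ∑ z, p z = 1) :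
    (∃ w : Fin n → (Fin n → Bool) → ℝ,
      ∀ Y : Fin n → (Fin n → Bool) → ℝ, NIA g Y →
        ∑ z, p z * ∑ i, w i z * Y i z = betaBar Y)
    ↔
    (∀ i : Fin n, ∃ z z' : Fin n → Bool,
      0 < p z ∧ 0 < p z' ∧ trDeg g z i = 0 ∧ trDeg g z' i = 0 ∧
      z i = true ∧ z' i = false) :=
  stmt_4_general n g hg p hp0
end

section
/- Fix a design p and weights w = (w_i)_{i∈[n]}. The linear estimator β̂^w is unbiased for β̄ for every collection of potential outcomes satisfying SANIA if and only if for every unit i: (C1) ∑_z p(z) w_i(z) z_i = 1/n; (C2) ∑_z p(z) w_i(z) = 0; and (C3′) for every d ∈ {1,…,d_i}, ∑_z p(z) w_i(z) 1{d_i^z = d} = 0. -/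
/-!
Both sides of the unbiasedness equation are linear in the outcome parameters `(α, β, Γ)`.
Exchanging the sums over allocations and units, and writing `Γᵢ(dᵢᶻ)` as a combination of the
indicators `1{dᵢᶻ = d}` for `d ≤ dᵢ`, the expected estimate becomes
`∑ᵢ (αᵢ · C2ᵢ + βᵢ · C1ᵢ + ∑_{d ≤ dᵢ} Γᵢ(d) · C3ᵢ(d))`.
Unbiasedness for all parameters therefore amounts to matching coefficients: testing with a single
nonzero `αᵢ`, `βᵢ` or `Γᵢ(d)` gives the conditions, and `Γᵢ(0) = 0` removes the `d = 0` term.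
-/

open Finset

/-- Degree of unit `i`: the number of its in-neighbors. -/
def deg {n : ℕ} (g : Fin n → Fin n → Bool) (i : Fin n) : ℕ :=
  (Finset.univ.filter fun j => g j i = true).card

lemma trDeg_le_deg {n : ℕ} (g : Fin n → Fin n → Bool) (z : Fin n → Bool) (i : Fin n) :
    trDeg g z i ≤ deg g i :=
  card_le_card <| monotone_filter_right _ fun _ _ h => h.1

lemma apply_eq_sum_range_mul_ite {M : Type*} [Semiring M] (f : ℕ → M) {k N : ℕ} (hk : k ≤ N) :
    f k = ∑ d ∈ range (N + 1), f d * if k = d then 1 else 0 := by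
  simp only [mul_ite, mul_one, mul_zero, sum_ite_eq, mem_range, Nat.lt_succ_of_le hk, if_true]

section Moments

variable {n : ℕ} (g : Fin n → Fin n → Bool) (p : (Fin n → Bool) → ℝ)
  (w : Fin n → (Fin n → Bool) → ℝ)

lemma expectation_linearEstimator (Y : Fin n → (Fin n → Bool) → ℝ) :
    ∑ z, p z * ∑ i, w i z * Y i z = ∑ i, ∑ z, p z * w i z * Y i z := by
  simp only [mul_sum, mul_assoc]
  exact sum_comm

lemma sum_mul_sania_outcome (i : Fin n) (a b : ℝ) (Γ : ℕ → ℝ) :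
    ∑ z, p z * w i z * (a + b * (if z i then (1 : ℝ) else 0) + Γ (trDeg g z i))
      = a * (∑ z, p z * w i z)
        + b * (∑ z, p z * w i z * (if z i then (1 : ℝ) else 0))
        + ∑ d ∈ range (deg g i + 1),
            Γ d * ∑ z, p z * w i z * (if trDeg g z i = d then (1 : ℝ) else 0) := by
  have hΓ : ∀ z, Γ (trDeg g z i)
      = ∑ d ∈ range (deg g i + 1), Γ d * if trDeg g z i = d then (1 : ℝ) else 0 :=
    fun z => apply_eq_sum_range_mul_ite Γ (trDeg_le_deg g z i)
  simp only [hΓ, mul_add, mul_sum, sum_add_distrib]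
  rw [sum_comm (s := univ)]
  congr 1
  · congr 1 <;> exact sum_congr rfl fun z _ => by ring
  · exact sum_congr rfl fun d _ => sum_congr rfl fun z _ => by ring

lemma expectation_sania_estimate (α β : Fin n → ℝ) (Γ : Fin n → ℕ → ℝ) :
    ∑ z, p z * ∑ i, w i z *
        (α i + β i * (if z i then (1 : ℝ) else 0) + Γ i (trDeg g z i))
      = ∑ i, (α i * (∑ z, p z * w i z)
        + β i * (∑ z, p z * w i z * (if z i then (1 : ℝ) else 0))
        + ∑ d ∈ range (deg g i + 1),
            Γ i d * ∑ z, p z * w i z * (if trDeg g z i = d then (1 : ℝ) else 0)) := by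
  rw [expectation_linearEstimator]
  exact sum_congr rfl fun i _ => sum_mul_sania_outcome g p w i (α i) (β i) (Γ i)

end Moments

theorem stmt_5_general (n : ℕ)
    (g : Fin n → Fin n → Bool)
    (p : (Fin n → Bool) → ℝ)
    (w : Fin n → (Fin n → Bool) → ℝ) :
    (∀ (α β : Fin n → ℝ) (Γ : Fin n → ℕ → ℝ), (∀ i, Γ i 0 = 0) →
      ∑ z, p z * ∑ i, w i z *
          (α i + β i * (if z i then (1 : ℝ) else 0) + Γ i (trDeg g z i))
        = (1 / (n : ℝ)) * ∑ i, β i)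
    ↔
    (∀ i : Fin n,
      -- (C1)
      (∑ z, p z * w i z * (if z i then (1 : ℝ) else 0)) = 1 / (n : ℝ) ∧
      -- (C2)
      (∑ z, p z * w i z) = 0 ∧
      -- (C3′)
      (∀ d : ℕ, 1 ≤ d → d ≤ deg g i →
        (∑ z, p z * w i z * (if trDeg g z i = d then (1 : ℝ) else 0)) = 0)) := by
  simp only [expectation_sania_estimate]
  constructor
  · intro h i
    refine ⟨?_, ?_, fun d hd hdi => ?_⟩
    · simpa [Pi.single_apply] using h 0 (Pi.single i 1) 0 fun _ => rfl
    · simpa [Pi.single_apply] using h (Pi.single i 1) 0 0 fun _ => rfl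
    · have := h 0 0 (fun j m => if j = i ∧ m = d then 1 else 0) fun _ => if_neg fun h => by omega
      simpa [ite_and, hdi] using this
  · intro h α β Γ hΓ
    rw [mul_sum]
    refine sum_congr rfl fun i _ => ?_
    obtain ⟨hC1, hC2, hC3⟩ := h i
    have hΓterms : ∀ d ∈ range (deg g i + 1),
        Γ i d * ∑ z, p z * w i z * (if trDeg g z i = d then (1 : ℝ) else 0) = 0 := by
      intro d hd
      rcases Nat.eq_zero_or_pos d with rfl | hpos
      · rw [hΓ, zero_mul]
      · rw [hC3 d hpos (Nat.lt_succ_iff.mp (mem_range.mp hd)), mul_zero]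
    rw [hC1, hC2, sum_eq_zero hΓterms]
    ring

/-- under SANIA (potential outcomes `Yᵢ(z) = αᵢ + βᵢ zᵢ + Γᵢ(dᵢ^z)` with
`Γᵢ(0) = 0`), the linear estimator `β̂^w` is unbiased for `β̄ = (1/n)∑ᵢ βᵢ` for every
such collection of potential outcomes iff constraints C1, C2 and C3′ hold for every unit. -/
theorem stmt_5 (n : ℕ) (hn : 1 ≤ n)
    (g : Fin n → Fin n → Bool) (hg : ∀ i, g i i = false)
    (p : (Fin n → Bool) → ℝ) (hp0 : ∀ z, 0 ≤ p z) (hp1 : ∑ z, p z = 1)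
    (w : Fin n → (Fin n → Bool) → ℝ) :
    (∀ (α β : Fin n → ℝ) (Γ : Fin n → ℕ → ℝ), (∀ i, Γ i 0 = 0) →
      ∑ z, p z * ∑ i, w i z *
          (α i + β i * (if z i then (1 : ℝ) else 0) + Γ i (trDeg g z i))
        = (1 / (n : ℝ)) * ∑ i, β i)
    ↔
    (∀ i : Fin n,
      -- (C1)
      (∑ z, p z * w i z * (if z i then (1 : ℝ) else 0)) = 1 / (n : ℝ) ∧
      -- (C2)
      (∑ z, p z * w i z) = 0 ∧
      -- (C3′)
      (∀ d : ℕ, 1 ≤ d → d ≤ deg g i →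
        (∑ z, p z * w i z * (if trDeg g z i = d then (1 : ℝ) else 0)) = 0)) :=
  stmt_5_general n g p w
end

section
/- Fix a design p. Linear unbiased estimators of β̄ under SANIA exist (i.e., there exist weights w such that β̂^w is unbiased for β̄ for every collection of potential outcomes satisfying SANIA) if and only if for each unit i there exist allocations z and z′ with p(z) > 0, p(z′) > 0, d_i^z = d_i^{z′}, z_i = 1, and z′_i = 0. -/
/-!
For unbiasedness, unit `i` can only be estimated through the signed measure `μᵢ(z) = p(z) wᵢ(z)`,
which must integrate the treatment indicator `zᵢ` to `1/n` and annihilate every function of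
the treated degree `dᵢ^z`. If no two allocations in the support of `p` share a treated degree
while disagreeing on `zᵢ`, then `zᵢ` itself is a function of `dᵢ^z` on the support, so it would
be annihilated too: a contradiction. Conversely, given such a pair `z, z'`, the contrast
`(Yᵢ(z) - Yᵢ(z'))/n`, reweighted by inverse probabilities, has expectation `βᵢ/n`, since the
intercept and the spillover term cancel.
-/

open Finset

section Contrast

variable {Ω : Type*} [Fintype Ω] [DecidableEq Ω]

noncomputable def contrastWeight (p : Ω → ℝ) (z₁ z₀ : Ω) (z : Ω) : ℝ :=
  (if z = z₁ then (p z₁)⁻¹ else 0) - (if z = z₀ then (p z₀)⁻¹ else 0)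

theorem sum_mul_contrastWeight_mul {p : Ω → ℝ} {z₁ z₀ : Ω} (h₁ : p z₁ ≠ 0) (h₀ : p z₀ ≠ 0)
    (Y : Ω → ℝ) : ∑ z, p z * (contrastWeight p z₁ z₀ z * Y z) = Y z₁ - Y z₀ := by
  simp only [contrastWeight, sub_mul, mul_sub, ite_mul, zero_mul, mul_ite, mul_zero,
    sum_sub_distrib, sum_ite_eq', mem_univ, if_true]
  field_simp

end Contrast

theorem exists_separating_of_sum_ne_zero {Ω : Type*} [Fintype Ω] {p : Ω → ℝ}
    (hp : ∀ z, 0 ≤ p z) (v : Ω → ℝ) (t : Ω → Bool) (d : Ω → ℕ)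
    (hv : ∀ h : ℕ → ℝ, ∑ z, p z * (v z * h (d z)) = 0)
    (ht : ∑ z, p z * (v z * if t z then 1 else 0) ≠ 0) :
    ∃ z z', 0 < p z ∧ 0 < p z' ∧ d z = d z' ∧ t z = true ∧ t z' = false := by
  classical
  by_contra! hsep
  -- `t` factors through `d` on the support of `p`
  let f : ℕ → ℝ := fun k => if ∃ z, 0 < p z ∧ d z = k ∧ t z = true then 1 else 0
  refine ht (Eq.trans (sum_congr rfl fun z _ => ?_) (hv f))
  rcases (hp z).eq_or_lt with hz | hz
  · simp [← hz]
  · congr 2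
    cases htz : t z
    · refine (if_neg ?_).symm
      rintro ⟨z', hz', hd, ht'⟩
      exact hsep z' z hz' hz hd ht' htz
    · exact (if_pos ⟨z, hz, rfl, htz⟩).symm

section SANIA

variable {n : ℕ}

def saniaOutcome (g : Fin n → Fin n → Bool) (α β : Fin n → ℝ) (Γ : Fin n → ℕ → ℝ) (i : Fin n)
    (z : Fin n → Bool) : ℝ :=
  α i + β i * (if z i then (1 : ℝ) else 0) + Γ i (trDeg g z i)

def IsUnbiasedUnderSANIA (p : (Fin n → Bool) → ℝ) (g : Fin n → Fin n → Bool)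
    (w : Fin n → (Fin n → Bool) → ℝ) : Prop :=
  ∀ (α β : Fin n → ℝ) (Γ : Fin n → ℕ → ℝ), (∀ i, Γ i 0 = 0) →
    ∑ z, p z * ∑ i, w i z * saniaOutcome g α β Γ i z = (1 / (n : ℝ)) * ∑ i, β i

theorem saniaOutcome_sub_of_trDeg_eq (g : Fin n → Fin n → Bool) (α β : Fin n → ℝ)
    (Γ : Fin n → ℕ → ℝ) {i : Fin n} {z z' : Fin n → Bool} (hd : trDeg g z i = trDeg g z' i)
    (hz : z i = true) (hz' : z' i = false) :
    saniaOutcome g α β Γ i z - saniaOutcome g α β Γ i z' = β i := by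
  simp only [saniaOutcome, hz, hz', hd, if_true, Bool.false_eq_true, if_false]
  ring

variable {p : (Fin n → Bool) → ℝ} {g : Fin n → Fin n → Bool}

theorem IsUnbiasedUnderSANIA.sum_single {w : Fin n → (Fin n → Bool) → ℝ}
    (hw : IsUnbiasedUnderSANIA p g w) (i : Fin n) (a b : ℝ) (γ : ℕ → ℝ) (hγ : γ 0 = 0) :
    ∑ z, p z * (w i z * (a + b * (if z i then 1 else 0) + γ (trDeg g z i))) = 1 / n * b := by
  have hΓ : ∀ j, Pi.single (M := fun _ => ℕ → ℝ) i γ j 0 = 0 := by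
    intro j
    rcases eq_or_ne j i with rfl | hj <;> simp [*]
  have h := hw (Pi.single i a) (Pi.single i b) (Pi.single i γ) hΓ
  rw [sum_pi_single', if_pos (mem_univ i)] at h
  rw [← h]
  refine sum_congr rfl fun z _ => ?_
  rw [sum_eq_single i (fun j _ hj => by simp [saniaOutcome, hj]) (by simp)]
  simp [saniaOutcome]

theorem isUnbiasedUnderSANIA_contrast {Z Z' : Fin n → Fin n → Bool}
    (hZ : ∀ i, p (Z i) ≠ 0) (hZ' : ∀ i, p (Z' i) ≠ 0)
    (hd : ∀ i, trDeg g (Z i) i = trDeg g (Z' i) i) (hZi : ∀ i, Z i i = true)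
    (hZ'i : ∀ i, Z' i i = false) :
    IsUnbiasedUnderSANIA p g fun i z => 1 / (n : ℝ) * contrastWeight p (Z i) (Z' i) z := by
  intro α β Γ _
  calc ∑ z, p z * ∑ i, 1 / (n : ℝ) * contrastWeight p (Z i) (Z' i) z * saniaOutcome g α β Γ i z
      = ∑ i, 1 / (n : ℝ) *
          ∑ z, p z * (contrastWeight p (Z i) (Z' i) z * saniaOutcome g α β Γ i z) := by
        simp only [mul_sum, sum_comm (γ := Fin n), mul_assoc, mul_left_comm (p _)]
    _ = (1 / (n : ℝ)) * ∑ i, β i := by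
        simp only [sum_mul_contrastWeight_mul (hZ _) (hZ' _),
          saniaOutcome_sub_of_trDeg_eq g α β Γ (hd _) (hZi _) (hZ'i _), mul_sum]

end SANIA

theorem stmt_6_general (n : ℕ)
    (g : Fin n → Fin n → Bool)
    (p : (Fin n → Bool) → ℝ) (hp0 : ∀ z, 0 ≤ p z) :
    (∃ w : Fin n → (Fin n → Bool) → ℝ,
      ∀ (α β : Fin n → ℝ) (Γ : Fin n → ℕ → ℝ), (∀ i, Γ i 0 = 0) →
        ∑ z, p z * ∑ i, w i z *
            (α i + β i * (if z i then (1 : ℝ) else 0) + Γ i (trDeg g z i))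
          = (1 / (n : ℝ)) * ∑ i, β i)
    ↔
    (∀ i : Fin n, ∃ z z' : Fin n → Bool,
      0 < p z ∧ 0 < p z' ∧ trDeg g z i = trDeg g z' i ∧
      z i = true ∧ z' i = false) := by
  change (∃ w, IsUnbiasedUnderSANIA p g w) ↔ _
  constructor
  · rintro ⟨w, hw⟩ i
    have hn : (n : ℝ) ≠ 0 := Nat.cast_ne_zero.mpr i.pos.ne'
    refine exists_separating_of_sum_ne_zero hp0 (w i) (· i) (trDeg g · i) (fun h => ?_) ?_
    · simpa using hw.sum_single i (h 0) 0 (fun k => h k - h 0) (sub_self _)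
    · have htreat := hw.sum_single i 0 1 0 rfl
      simp only [zero_add, one_mul, Pi.zero_apply, add_zero, mul_one] at htreat
      rw [htreat]
      exact one_div_ne_zero hn
  · intro hsep
    choose Z Z' hZ hZ' hd hZi hZ'i using hsep
    exact ⟨_, isUnbiasedUnderSANIA_contrast (fun i => (hZ i).ne') (fun i => (hZ' i).ne')
      hd hZi hZ'i⟩

/-- linear unbiased estimators of `β̄` under SANIA exist iff for each
unit `i` there are allocations `z, z'` of positive probability with `dᵢ^z = dᵢ^{z'}`,
`zᵢ = 1` and `z'ᵢ = 0`. -/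
theorem stmt_6 (n : ℕ) (hn : 1 ≤ n)
    (g : Fin n → Fin n → Bool) (hg : ∀ i, g i i = false)
    (p : (Fin n → Bool) → ℝ) (hp0 : ∀ z, 0 ≤ p z) (hp1 : ∑ z, p z = 1) :
    (∃ w : Fin n → (Fin n → Bool) → ℝ,
      ∀ (α β : Fin n → ℝ) (Γ : Fin n → ℕ → ℝ), (∀ i, Γ i 0 = 0) →
        ∑ z, p z * ∑ i, w i z *
            (α i + β i * (if z i then (1 : ℝ) else 0) + Γ i (trDeg g z i))
          = (1 / (n : ℝ)) * ∑ i, β i)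
    ↔
    (∀ i : Fin n, ∃ z z' : Fin n → Bool,
      0 < p z ∧ 0 < p z' ∧ trDeg g z i = trDeg g z' i ∧
      z i = true ∧ z' i = false) :=
  stmt_6_general n g p hp0
end

section
/- Fix a design p, let h be the graph on [n] with h_{ij} = 1{(gᵀg)_{ij} > 0}, and let C_1,…,C_K be the connected components of h. Fix weights w = (w_i)_{i∈[n]}. The linear estimator β̂^w is unbiased for β̄ for every collection of potential outcomes of the SANASIA form Y_i(z) = α_i + β_i z_i + γ_{k(i)} d_i^z (where k(i) is the index of the component of h containing i and α_i, β_i, γ_1,…,γ_K are arbitrary reals) if and only if for every unit i: (C1) ∑_z p(z) w_i(z) z_i = 1/n and (C2) ∑_z p(z) w_i(z) = 0, and additionally for every component k ∈ {1,…,K}: (C3″) ∑_z p(z) ∑_{i ∈ C_k} w_i(z) d_i^z = 0. -/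
/-!
The expected value of `β̂^w` is affine in the outcome parameters `(α, β, γ)`, with coefficients
the moments `E[wᵢ]`, `E[wᵢ zᵢ]` and `E[wᵢ dᵢ^z]`. Testing unbiasedness on indicator outcomes
yields (C1), (C2) and, with `γ` the indicator of a component of `h`, (C3″). Conversely, since `γ`
is constant on every component, `∑ᵢ γᵢ E[wᵢ dᵢ^z]` splits over the components into `γ_k` times
the component sums of (C3″), which vanish.
-/

open Finset
open scoped Classical

/-- Adjacency in the graph `h`: units `a` and `b` share a common in-neighbor,
i.e. `(gᵀg)_{ab} > 0`. -/
def shareNbr {n : ℕ} (g : Fin n → Fin n → Bool) (a b : Fin n) : Prop :=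
  ∃ j, g j a = true ∧ g j b = true

theorem Relation.equivalence_reflTransGen {α : Type*} {r : α → α → Prop} [Std.Symm r] :
    Equivalence (Relation.ReflTransGen r) :=
  ⟨fun _ => .refl, fun h => Std.Symm.symm _ _ h, .trans⟩

instance {n : ℕ} (g : Fin n → Fin n → Bool) : Std.Symm (shareNbr g) :=
  ⟨fun _ _ ⟨j, ha, hb⟩ => ⟨j, hb, ha⟩⟩

section ClassSums

variable {ι R : Type*} [Fintype ι] [CommRing R] {r : ι → ι → Prop} [DecidableRel r]

theorem sum_mul_eq_zero_of_classSums_eq_zero (hr : Equivalence r) {γ D : ι → R}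
    (hγ : ∀ i j, r i j → γ i = γ j) (hD : ∀ i₀, ∑ i with r i₀ i, D i = 0) :
    ∑ i, γ i * D i = 0 := by
  let s : Setoid ι := ⟨r, hr⟩
  rw [← sum_fiberwise univ (Quotient.mk s)]
  refine Fintype.sum_eq_zero _ fun q => ?_
  induction q using Quotient.inductionOn with
  | h i₀ =>
    have fiber : univ.filter (fun i => Quotient.mk s i = ⟦i₀⟧) = univ.filter (r i₀ ·) := by
      ext i
      simp only [mem_filter, mem_univ, true_and, Quotient.eq]
      exact ⟨hr.symm, hr.symm⟩
    rw [fiber, ← mul_zero (γ i₀), ← hD i₀, mul_sum]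
    exact sum_congr rfl fun i hi => by rw [hγ i₀ i (mem_filter.1 hi).2]

theorem unbiased_iff_moment_conditions {A B D : ι → R} {c : R} (hr : Equivalence r) :
    (∀ α β γ : ι → R, (∀ i j, r i j → γ i = γ j) →
      ∑ i, (α i * A i + β i * B i + γ i * D i) = c * ∑ i, β i) ↔
    (∀ i, B i = c ∧ A i = 0) ∧ ∀ i₀, ∑ i, (if r i₀ i then D i else 0) = 0 := by
  constructor
  · intro H
    refine ⟨fun i => ⟨?_, ?_⟩, fun i₀ => ?_⟩
    · simpa [ite_mul] using H 0 (fun j => if j = i then 1 else 0) 0 (by simp)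
    · simpa [ite_mul] using H (fun j => if j = i then 1 else 0) 0 0 (by simp)
    · have hγ : ∀ i j, r i j → (if r i₀ i then (1 : R) else 0) = if r i₀ j then 1 else 0 :=
        fun _ _ hij => if_congr ⟨(hr.trans · hij), (hr.trans · (hr.symm hij))⟩ rfl rfl
      simpa [ite_mul] using H 0 0 (fun i => if r i₀ i then 1 else 0) hγ
  · rintro ⟨hAB, hD⟩ α β γ hγ
    have hγD : ∑ i, γ i * D i = 0 :=
      sum_mul_eq_zero_of_classSums_eq_zero hr hγ fun i₀ => by rw [sum_filter, hD]
    simp only [sum_add_distrib, hγD, (hAB _).1, (hAB _).2, mul_zero, add_zero, zero_add,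
      mul_comm c, sum_mul]

end ClassSums

section Expectation

variable {ι Ω R : Type*} [Fintype ι] [Fintype Ω] [CommRing R]

theorem sum_mul_sum_affine_eq (p : Ω → R) (w x y : ι → Ω → R) (α β γ : ι → R) :
    ∑ z, p z * ∑ i, w i z * (α i + β i * x i z + γ i * y i z) =
      ∑ i, (α i * ∑ z, p z * w i z + β i * ∑ z, p z * w i z * x i z +
        γ i * ∑ z, p z * w i z * y i z) := by
  simp only [mul_sum]
  rw [sum_comm]
  refine sum_congr rfl fun i _ => ?_
  rw [← sum_add_distrib, ← sum_add_distrib]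
  exact sum_congr rfl fun z _ => by ring

theorem sum_mul_sum_ite_eq (p : Ω → R) (w y : ι → Ω → R) (P : ι → Prop) [DecidablePred P] :
    ∑ z, p z * ∑ i, (if P i then w i z * y i z else 0) =
      ∑ i, if P i then ∑ z, p z * w i z * y i z else 0 := by
  simp only [mul_sum, mul_ite, mul_zero]
  rw [sum_comm]
  refine sum_congr rfl fun i _ => ?_
  split_ifs <;> simp only [mul_assoc, sum_const_zero]

end Expectation

theorem stmt_7_general (n : ℕ)
    (g : Fin n → Fin n → Bool)
    (p : (Fin n → Bool) → ℝ)
    (w : Fin n → (Fin n → Bool) → ℝ) :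
    (∀ (α β γ : Fin n → ℝ),
      (∀ i i' : Fin n, Relation.ReflTransGen (shareNbr g) i i' → γ i = γ i') →
      ∑ z, p z * ∑ i, w i z *
          (α i + β i * (if z i then (1 : ℝ) else 0) + γ i * (trDeg g z i : ℝ))
        = (1 / (n : ℝ)) * ∑ i, β i)
    ↔
    ((∀ i : Fin n,
        -- (C1)
        (∑ z, p z * w i z * (if z i then (1 : ℝ) else 0)) = 1 / (n : ℝ) ∧
        -- (C2)
        (∑ z, p z * w i z) = 0) ∧
      -- (C3″), one constraint for each connected component of `h`
      (∀ i0 : Fin n,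
        (∑ z, p z * ∑ i, (if Relation.ReflTransGen (shareNbr g) i0 i
          then w i z * (trDeg g z i : ℝ) else 0)) = 0)) := by
  simp only [sum_mul_sum_affine_eq, sum_mul_sum_ite_eq]
  exact unbiased_iff_moment_conditions Relation.equivalence_reflTransGen

/-- under the SANASIA form `Yᵢ(z) = αᵢ + βᵢ zᵢ + γ_{k(i)} dᵢ^z` (with
`γ` constant on connected components of `h`), the linear estimator `β̂^w` is unbiased
for `β̄` for every such collection of potential outcomes iff C1 and C2 hold for every
unit and C3″ holds for every connected component of `h`. -/
theorem stmt_7 (n : ℕ) (hn : 1 ≤ n)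
    (g : Fin n → Fin n → Bool) (hg : ∀ i, g i i = false)
    (p : (Fin n → Bool) → ℝ) (hp0 : ∀ z, 0 ≤ p z) (hp1 : ∑ z, p z = 1)
    (w : Fin n → (Fin n → Bool) → ℝ) :
    (∀ (α β γ : Fin n → ℝ),
      (∀ i i' : Fin n, Relation.ReflTransGen (shareNbr g) i i' → γ i = γ i') →
      ∑ z, p z * ∑ i, w i z *
          (α i + β i * (if z i then (1 : ℝ) else 0) + γ i * (trDeg g z i : ℝ))
        = (1 / (n : ℝ)) * ∑ i, β i)
    ↔
    ((∀ i : Fin n,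
        -- (C1)
        (∑ z, p z * w i z * (if z i then (1 : ℝ) else 0)) = 1 / (n : ℝ) ∧
        -- (C2)
        (∑ z, p z * w i z) = 0) ∧
      -- (C3″), one constraint for each connected component of `h`
      (∀ i0 : Fin n,
        (∑ z, p z * ∑ i, (if Relation.ReflTransGen (shareNbr g) i0 i
          then w i z * (trDeg g z i : ℝ) else 0)) = 0)) :=
  stmt_7_general n g p w
end

section
/- Suppose n ≥ 2 and the network is complete: g_{ij} = 1 for all i ≠ j. Then linear unbiased estimators of β̄ under NIA exist for a design p if and only if p(0) > 0 and p(e_i) > 0 for every unit i, where e_i is the allocation treating only unit i and 0 is the all-zero allocation. -/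
/-! On the complete network NIA restricts nothing, so unbiasedness must hold for every potential
outcome table `Y`. Both sides are linear in `Y`, hence unbiasedness amounts to
`p z * w i z = βᵢ(z)` for all `i, z`, where `βᵢ(z)` is the coefficient of `Yᵢ(z)` in `β̄`:
`1/n` at `z = eᵢ`, `-1/n` at `z = 0`, and `0` elsewhere. Such weights exist exactly when `p`
vanishes nowhere on the support of these coefficients. -/

open Finset

lemma nia_of_complete {n : ℕ} {g : Fin n → Fin n → Bool}
    (hcomp : ∀ i j : Fin n, i ≠ j → g i j = true) (Y : Fin n → (Fin n → Bool) → ℝ) :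
    NIA g Y := by
  intro i z z' hz
  congr 1
  funext j
  by_cases hj : j = i
  · exact hz j (Or.inr hj)
  · exact hz j (Or.inl (hcomp j i hj))

lemma forall_sum_sum_mul_eq_iff {ι κ : Type*} [Fintype ι] [Fintype κ] {a b : ι → κ → ℝ} :
    (∀ Y : ι → κ → ℝ, ∑ i, ∑ k, a i k * Y i k = ∑ i, ∑ k, b i k * Y i k) ↔ a = b := by
  classical
  refine ⟨fun h => funext₂ fun i k => ?_, fun h _ => h ▸ rfl⟩
  simpa [ite_and] using h fun i' k' => if i' = i ∧ k' = k then 1 else 0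

lemma exists_mul_eq_iff {α β : Type*} (p : β → ℝ) (c : α → β → ℝ) :
    (∃ w : α → β → ℝ, ∀ a b, p b * w a b = c a b) ↔ ∀ a b, c a b ≠ 0 → p b ≠ 0 := by
  constructor
  · rintro ⟨w, hw⟩ a b hc hp
    rw [← hw, hp, zero_mul] at hc
    exact hc rfl
  · intro h
    refine ⟨fun a b => c a b / p b, fun a b => ?_⟩
    by_cases hp : p b = 0
    · have hc : c a b = 0 := by_contra fun hc => h a b hc hp
      rw [hp, hc, zero_mul]
    · exact mul_div_cancel₀ _ hp

section BetaWeight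

variable {n : ℕ}

/-- The coefficient of `Yᵢ(z)` in `β̄`. -/
noncomputable def betaWeight (i : Fin n) (z : Fin n → Bool) : ℝ :=
  ((if z = fun j => decide (j = i) then 1 else 0) - (if z = fun _ => false then 1 else 0)) / n

lemma betaBar_eq_sum_betaWeight (Y : Fin n → (Fin n → Bool) → ℝ) :
    betaBar Y = ∑ i, ∑ z, betaWeight i z * Y i z := by
  simp only [betaBar, betaWeight, div_mul_eq_mul_div, sub_mul, ite_mul, one_mul, zero_mul,
    sum_sub_distrib, sum_ite_eq', mem_univ, if_true, ← sum_div]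

lemma singleton_ne_zero (i : Fin n) : (fun j => decide (j = i)) ≠ fun _ => false :=
  fun h => by simpa using congrFun h i

lemma betaWeight_ne_zero_iff (hn : n ≠ 0) {i : Fin n} {z : Fin n → Bool} :
    betaWeight i z ≠ 0 ↔ z = (fun j => decide (j = i)) ∨ z = fun _ => false := by
  have hn' : (n : ℝ) ≠ 0 := Nat.cast_ne_zero.mpr hn
  rcases eq_or_ne z (fun j => decide (j = i)) with rfl | h₁
  · simp [betaWeight, singleton_ne_zero, hn']
  rcases eq_or_ne z (fun _ => false) with rfl | h₀
  · simp [betaWeight, (singleton_ne_zero i).symm, hn']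
  · simp [betaWeight, h₁, h₀]

end BetaWeight

theorem stmt_10_general (n : ℕ) (hn : 2 ≤ n)
    (g : Fin n → Fin n → Bool)
    (hcomp : ∀ i j : Fin n, i ≠ j → g i j = true)
    (p : (Fin n → Bool) → ℝ) (hp0 : ∀ z, 0 ≤ p z) :
    (∃ w : Fin n → (Fin n → Bool) → ℝ,
      ∀ Y : Fin n → (Fin n → Bool) → ℝ, NIA g Y →
        ∑ z, p z * ∑ i, w i z * Y i z = betaBar Y)
    ↔
    (0 < p (fun _ => false) ∧ ∀ i : Fin n, 0 < p (fun j => decide (j = i))) := by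
  have hn0 : n ≠ 0 := by omega
  have hpos : ∀ z, 0 < p z ↔ p z ≠ 0 := fun z => (hp0 z).lt_iff_ne'
  have hreorder : ∀ (w Y : Fin n → (Fin n → Bool) → ℝ),
      ∑ z, p z * ∑ i, w i z * Y i z = ∑ i, ∑ z, p z * w i z * Y i z := fun w Y => by
    simp only [mul_sum, mul_assoc]
    exact sum_comm
  simp only [nia_of_complete hcomp, forall_const, hreorder, betaBar_eq_sum_betaWeight,
    forall_sum_sum_mul_eq_iff, funext_iff]
  rw [exists_mul_eq_iff]
  simp only [betaWeight_ne_zero_iff hn0, hpos]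
  constructor
  · intro h
    exact ⟨h ⟨0, by omega⟩ _ (Or.inr rfl), fun i => h i _ (Or.inl rfl)⟩
  · rintro ⟨h₀, h₁⟩ i z (rfl | rfl)
    exacts [h₁ i, h₀]

/-- for the complete network on `n ≥ 2` units, linear unbiased
estimators of `β̄` under NIA exist iff the design puts positive mass on the
all-zero allocation and on each singleton allocation `eᵢ`. -/
theorem stmt_10 (n : ℕ) (hn : 2 ≤ n)
    (g : Fin n → Fin n → Bool) (hg : ∀ i, g i i = false)
    (hcomp : ∀ i j : Fin n, i ≠ j → g i j = true)
    (p : (Fin n → Bool) → ℝ) (hp0 : ∀ z, 0 ≤ p z) (hp1 : ∑ z, p z = 1) :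
    (∃ w : Fin n → (Fin n → Bool) → ℝ,
      ∀ Y : Fin n → (Fin n → Bool) → ℝ, NIA g Y →
        ∑ z, p z * ∑ i, w i z * Y i z = betaBar Y)
    ↔
    (0 < p (fun _ => false) ∧ ∀ i : Fin n, 0 < p (fun j => decide (j = i))) :=
  stmt_10_general n hn g hcomp p hp0
end

section
/- Suppose n ≥ 2, the network is complete (g_{ij} = 1 for all i ≠ j), and the design p is supported on allocations with exactly k treated units for some fixed k (i.e., p(z) > 0 implies ∑_i z_i = k). Then no linear unbiased estimator of β̄ under SANIA exists: for every unit i and any two allocations z, z′ in the support with z_i = 1 and z′_i = 0, one has d_i^z = k − 1 ≠ k = d_i^{z′}, so the existence characterization fails. -/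
open Finset

/-- Number of treated units under allocation `z`. -/
def numTreated {n : ℕ} (z : Fin n → Bool) : ℕ :=
  (Finset.univ.filter fun i => z i = true).card

/-
The treatment indicator `zᵢ` is itself a SANIA outcome with `βᵢ = 1`, so an unbiased estimator
has expectation `1` on it. On the complete network with `k` treated units, however, `zᵢ` is a
function of the treated degree alone (`dᵢ^z = k - 1` iff `zᵢ = 1`), so the same outcome is also
one with `β = 0`, on which the estimator must have expectation `0`.
-/

def ExistsLinearUnbiasedEstimator {n : ℕ} (p : (Fin n → Bool) → ℝ)
    (d : (Fin n → Bool) → Fin n → ℕ) : Prop :=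
  ∃ w : Fin n → (Fin n → Bool) → ℝ,
    ∀ (α β : Fin n → ℝ) (Γ : Fin n → ℕ → ℝ), (∀ i, Γ i 0 = 0) →
      ∑ z, p z * ∑ i, w i z * (α i + β i * (if z i then (1 : ℝ) else 0) + Γ i (d z i))
        = (1 / (n : ℝ)) * ∑ i, β i

theorem not_existsLinearUnbiasedEstimator_of_indicator_eq_comp {n : ℕ} (hn : n ≠ 0)
    (p : (Fin n → Bool) → ℝ) (d : (Fin n → Bool) → Fin n → ℕ) (f : Fin n → ℕ → ℝ)
    (hf : ∀ z, p z ≠ 0 → ∀ i, (if z i then (1 : ℝ) else 0) = f i (d z i)) :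
    ¬ ExistsLinearUnbiasedEstimator p d := by
  rintro ⟨w, hw⟩
  have hdirect := hw 0 (fun _ => 1) (fun _ _ => 0) fun _ => rfl
  -- `zᵢ = f i 0 + (f i dᵢ^z - f i 0)` on the support: an outcome with `α`, `Γ` but no `β`
  have hexposure := hw (fun i => f i 0) 0 (fun i m => f i m - f i 0) fun _ => sub_self _
  have hsame : ∑ z, p z * ∑ i, w i z *
        (f i 0 + (0 : Fin n → ℝ) i * (if z i then (1 : ℝ) else 0) + (f i (d z i) - f i 0))
      = ∑ z, p z * ∑ i, w i z *
        ((0 : Fin n → ℝ) i + 1 * (if z i then (1 : ℝ) else 0) + 0) := by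
    refine sum_congr rfl fun z _ => ?_
    rcases eq_or_ne (p z) 0 with hpz | hpz
    · simp only [hpz, zero_mul]
    · simp only [hf z hpz, Pi.zero_apply]
      ring_nf
  rw [hsame, hdirect] at hexposure
  simp [hn] at hexposure

section CompleteNetwork

variable {n : ℕ} {g : Fin n → Fin n → Bool}

theorem trDeg_eq_card_erase (hg : ∀ i, g i i = false)
    (hcomp : ∀ i j : Fin n, i ≠ j → g i j = true) (z : Fin n → Bool) (i : Fin n) :
    trDeg g z i = ((univ.filter fun j => z j = true).erase i).card := by
  unfold trDeg
  congr 1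
  ext j
  simp only [mem_filter, mem_erase, mem_univ, true_and]
  constructor
  · rintro ⟨hgj, hzj⟩
    exact ⟨fun hji => by simp [hji, hg] at hgj, hzj⟩
  · rintro ⟨hji, hzj⟩
    exact ⟨hcomp j i hji, hzj⟩

theorem trDeg_of_treated (hg : ∀ i, g i i = false)
    (hcomp : ∀ i j : Fin n, i ≠ j → g i j = true) {z : Fin n → Bool} {i : Fin n}
    (hzi : z i = true) : trDeg g z i = numTreated z - 1 := by
  rw [trDeg_eq_card_erase hg hcomp, card_erase_of_mem (by simp [hzi]), numTreated]

theorem trDeg_of_untreated (hg : ∀ i, g i i = false)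
    (hcomp : ∀ i j : Fin n, i ≠ j → g i j = true) {z : Fin n → Bool} {i : Fin n}
    (hzi : z i = false) : trDeg g z i = numTreated z := by
  rw [trDeg_eq_card_erase hg hcomp, erase_eq_of_notMem (by simp [hzi]), numTreated]

theorem numTreated_pos {z : Fin n → Bool} {i : Fin n} (hzi : z i = true) :
    0 < numTreated z :=
  card_pos.mpr ⟨i, by simp [hzi]⟩

theorem indicator_eq_of_numTreated_eq (hg : ∀ i, g i i = false)
    (hcomp : ∀ i j : Fin n, i ≠ j → g i j = true) {k : ℕ} {z : Fin n → Bool}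
    (hz : numTreated z = k) (i : Fin n) :
    (if z i then (1 : ℝ) else 0) = if trDeg g z i + 1 = k then 1 else 0 := by
  cases hzi : z i
  · simp [trDeg_of_untreated hg hcomp hzi, hz]
  · have := numTreated_pos hzi
    simp only [trDeg_of_treated hg hcomp hzi, if_true]
    rw [if_pos (by omega)]

end CompleteNetwork

theorem stmt_11_general (n : ℕ) (hn : 2 ≤ n) (k : ℕ)
    (g : Fin n → Fin n → Bool) (hg : ∀ i, g i i = false)
    (hcomp : ∀ i j : Fin n, i ≠ j → g i j = true)
    (p : (Fin n → Bool) → ℝ) (hp0 : ∀ z, 0 ≤ p z)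
    (hsupp : ∀ z : Fin n → Bool, 0 < p z → numTreated z = k) :
    (∀ (i : Fin n) (z z' : Fin n → Bool), 0 < p z → 0 < p z' →
      z i = true → z' i = false →
        trDeg g z i = k - 1 ∧ trDeg g z' i = k ∧ trDeg g z i ≠ trDeg g z' i) ∧
    ¬ (∃ w : Fin n → (Fin n → Bool) → ℝ,
      ∀ (α β : Fin n → ℝ) (Γ : Fin n → ℕ → ℝ), (∀ i, Γ i 0 = 0) →
        ∑ z, p z * ∑ i, w i z *
            (α i + β i * (if z i then (1 : ℝ) else 0) + Γ i (trDeg g z i))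
          = (1 / (n : ℝ)) * ∑ i, β i) := by
  refine ⟨fun i z z' hz hz' hzi hz'i => ?_, ?_⟩
  · have hk := numTreated_pos hzi
    rw [hsupp z hz] at hk
    rw [trDeg_of_treated hg hcomp hzi, trDeg_of_untreated hg hcomp hz'i, hsupp z hz,
      hsupp z' hz']
    omega
  · exact not_existsLinearUnbiasedEstimator_of_indicator_eq_comp (by omega) p (trDeg g)
      (fun _ m => if m + 1 = k then 1 else 0)
      fun z hz => indicator_eq_of_numTreated_eq hg hcomp (hsupp z ((hp0 z).lt_of_ne' hz))

/-- on the complete network with `n ≥ 2` units, if the design is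
supported on allocations with exactly `k` treated units, then for every unit `i`
and supported allocations `z, z'` with `zᵢ = 1`, `z'ᵢ = 0` we have
`dᵢ^z = k - 1 ≠ k = dᵢ^{z'}`, and no linear unbiased estimator of `β̄` under SANIA
exists. -/
theorem stmt_11 (n : ℕ) (hn : 2 ≤ n) (k : ℕ)
    (g : Fin n → Fin n → Bool) (hg : ∀ i, g i i = false)
    (hcomp : ∀ i j : Fin n, i ≠ j → g i j = true)
    (p : (Fin n → Bool) → ℝ) (hp0 : ∀ z, 0 ≤ p z) (hp1 : ∑ z, p z = 1)
    (hsupp : ∀ z : Fin n → Bool, 0 < p z → numTreated z = k) :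
    (∀ (i : Fin n) (z z' : Fin n → Bool), 0 < p z → 0 < p z' →
      z i = true → z' i = false →
        trDeg g z i = k - 1 ∧ trDeg g z' i = k ∧ trDeg g z i ≠ trDeg g z' i) ∧
    ¬ (∃ w : Fin n → (Fin n → Bool) → ℝ,
      ∀ (α β : Fin n → ℝ) (Γ : Fin n → ℕ → ℝ), (∀ i, Γ i 0 = 0) →
        ∑ z, p z * ∑ i, w i z *
            (α i + β i * (if z i then (1 : ℝ) else 0) + Γ i (trDeg g z i))
          = (1 / (n : ℝ)) * ∑ i, β i) :=
  stmt_11_general n hn k g hg hcomp p hp0 hsupp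
end

section
/- (SUTVA, uncorrelated prior.) Fix a design p such that for each unit i, π_i(1) := ∑_z p(z) z_i ∈ (0,1), and write π_i(0) = 1 − π_i(1). For each unit i let v_i : {0,1} → ℝ with v_i(0) > 0 and v_i(1) > 0 (the per-unit prior variance of the observed outcome, which under a mean-zero prior uncorrelated across units equals v_i(z_i) = σ²_{α,i} + z_i(σ²_{β,i} + 2σ_{αβ,i})). Consider the integrated variance objective IV(w) = ∑_z p(z) ∑_i w_i(z)² v_i(z_i), minimized over all weights w satisfying, for every i, the SUTVA unbiasedness constraints (C1) ∑_z p(z) w_i(z) z_i = 1/n and (C2) ∑_z p(z) w_i(z) = 0. Then the Horvitz–Thompson weights w*_i(z) = (2z_i − 1)/(n π_i(z_i)) satisfy the constraints and minimize IV: for every w satisfying C1 and C2 for all i, IV(w*) ≤ IV(w). -/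
/-!
The problem decouples over units. For a single unit `i`, the Horvitz–Thompson weight
`w*ᵢ(z)` depends on `z` only through `zᵢ`, and so does `w*ᵢ(z) vᵢ(zᵢ)`; every function of a
Boolean is affine in the indicator of `zᵢ`. Hence for any `wᵢ` satisfying C1 and C2 the
cross term `∑_z p(z) w*ᵢ(z) vᵢ(zᵢ) (wᵢ(z) - w*ᵢ(z))` is a combination of the differences of
the two constraints, so it vanishes, and expanding `wᵢ = w*ᵢ + (wᵢ - w*ᵢ)` gives
`IVᵢ(wᵢ) = IVᵢ(w*ᵢ) + ∑_z p(z) (wᵢ(z) - w*ᵢ(z))² vᵢ(zᵢ) ≥ IVᵢ(w*ᵢ)`.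
-/

open Finset

namespace SUTVA

variable {Ω : Type*} [Fintype Ω]

noncomputable def marginal (p : Ω → ℝ) (s : Ω → Bool) (b : Bool) : ℝ :=
  ∑ z, p z * if s z = b then 1 else 0

noncomputable def htWeight (n : ℕ) (π : Bool → ℝ) (b : Bool) : ℝ :=
  ((if b then 2 else 0) - 1) / ((n : ℝ) * π b)

theorem sum_mul_comp_eq_marginal (p : Ω → ℝ) (s : Ω → Bool) (f : Bool → ℝ) :
    ∑ z, p z * f (s z) = marginal p s true * f true + marginal p s false * f false := by
  have hf : ∀ z, p z * f (s z) = (p z * if s z = true then 1 else 0) * f true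
      + (p z * if s z = false then 1 else 0) * f false := by
    intro z; cases s z <;> simp
  simp only [hf, sum_add_distrib, ← sum_mul, marginal]

theorem marginal_true_add_false (p : Ω → ℝ) (s : Ω → Bool) :
    marginal p s true + marginal p s false = ∑ z, p z := by
  simpa using (sum_mul_comp_eq_marginal p s fun _ => 1).symm

section Unbiased

variable (n : ℕ) (p : Ω → ℝ) (s : Ω → Bool)

theorem sum_htWeight_mul_indicator (h₁ : marginal p s true ≠ 0) :
    ∑ z, p z * htWeight n (marginal p s) (s z) * (if s z then 1 else 0) = 1 / (n : ℝ) := by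
  simp_rw [mul_assoc]
  rw [sum_mul_comp_eq_marginal p s fun b => htWeight n (marginal p s) b * if b then 1 else 0]
  simp only [htWeight]
  field_simp
  norm_num

theorem sum_htWeight (h₁ : marginal p s true ≠ 0) (h₀ : marginal p s false ≠ 0) :
    ∑ z, p z * htWeight n (marginal p s) (s z) = 0 := by
  rw [sum_mul_comp_eq_marginal p s fun b => htWeight n (marginal p s) b]
  simp only [htWeight]
  field_simp
  norm_num

end Unbiased

theorem sum_mul_comp_mul_eq_zero (p : Ω → ℝ) (s : Ω → Bool) (h : Bool → ℝ) (d : Ω → ℝ)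
    (hd₁ : ∑ z, p z * d z * (if s z then 1 else 0) = 0) (hd : ∑ z, p z * d z = 0) :
    ∑ z, p z * (h (s z) * d z) = 0 := by
  have hh : ∀ z, p z * (h (s z) * d z) =
      h false * (p z * d z) + (h true - h false) * (p z * d z * if s z then 1 else 0) := by
    intro z; cases s z <;> simp <;> ring
  simp only [hh, sum_add_distrib, ← mul_sum, hd₁, hd, mul_zero, add_zero]

theorem sum_mul_sq_le_of_sum_cross_eq_zero (p v u w : Ω → ℝ) (hp : ∀ z, 0 ≤ p z)
    (hv : ∀ z, 0 ≤ v z) (hcross : ∑ z, p z * (u z * v z * (w z - u z)) = 0) :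
    ∑ z, p z * (u z ^ 2 * v z) ≤ ∑ z, p z * (w z ^ 2 * v z) := by
  have hsplit : ∑ z, p z * (w z ^ 2 * v z) = ∑ z, p z * (u z ^ 2 * v z)
      + 2 * ∑ z, p z * (u z * v z * (w z - u z)) + ∑ z, p z * ((w z - u z) ^ 2 * v z) := by
    rw [mul_sum, ← sum_add_distrib, ← sum_add_distrib]
    exact sum_congr rfl fun z _ => by ring
  have hrest : 0 ≤ ∑ z, p z * ((w z - u z) ^ 2 * v z) :=
    sum_nonneg fun z _ => mul_nonneg (hp z) (mul_nonneg (sq_nonneg _) (hv z))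
  linarith

theorem sum_htWeight_sq_le (n : ℕ) (p : Ω → ℝ) (s : Ω → Bool) (v : Bool → ℝ) (w : Ω → ℝ)
    (hp : ∀ z, 0 ≤ p z) (hv : ∀ b, 0 ≤ v b)
    (h₁ : marginal p s true ≠ 0) (h₀ : marginal p s false ≠ 0)
    (hw₁ : ∑ z, p z * w z * (if s z then 1 else 0) = 1 / (n : ℝ))
    (hw : ∑ z, p z * w z = 0) :
    ∑ z, p z * (htWeight n (marginal p s) (s z) ^ 2 * v (s z)) ≤
      ∑ z, p z * (w z ^ 2 * v (s z)) := by
  set u : Ω → ℝ := fun z => htWeight n (marginal p s) (s z)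
  refine sum_mul_sq_le_of_sum_cross_eq_zero p (fun z => v (s z)) u w hp (fun z => hv _) ?_
  refine sum_mul_comp_mul_eq_zero p s (fun b => htWeight n (marginal p s) b * v b) _ ?_ ?_
  · simp only [mul_sub, sub_mul, sum_sub_distrib, hw₁,
      sum_htWeight_mul_indicator n p s h₁, u, sub_self]
  · simp only [mul_sub, sum_sub_distrib, hw, sum_htWeight n p s h₁ h₀, u, sub_self]

end SUTVA

open SUTVA in
theorem stmt_13_general (n : ℕ)
    (p : (Fin n → Bool) → ℝ) (hp0 : ∀ z, 0 ≤ p z) (hp1 : ∑ z, p z = 1)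
    (π : Fin n → Bool → ℝ)
    (hπdef : ∀ i a, π i a = ∑ z, p z * (if z i = a then (1 : ℝ) else 0))
    (hπ : ∀ i, 0 < π i true ∧ π i true < 1)
    (v : Fin n → Bool → ℝ) (hv : ∀ i a, 0 < v i a)
    (wstar : Fin n → (Fin n → Bool) → ℝ)
    (hws : ∀ i z, wstar i z =
      ((if z i then (2 : ℝ) else 0) - 1) / ((n : ℝ) * π i (z i))) :
    ((∀ i : Fin n,
        (∑ z, p z * wstar i z * (if z i then (1 : ℝ) else 0)) = 1 / (n : ℝ) ∧
        (∑ z, p z * wstar i z) = 0) ∧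
      (∀ w : Fin n → (Fin n → Bool) → ℝ,
        (∀ i : Fin n,
          (∑ z, p z * w i z * (if z i then (1 : ℝ) else 0)) = 1 / (n : ℝ) ∧
          (∑ z, p z * w i z) = 0) →
        (∑ z, p z * ∑ i, (wstar i z) ^ 2 * v i (z i)) ≤
          (∑ z, p z * ∑ i, (w i z) ^ 2 * v i (z i)))) := by
  obtain rfl : π = fun i => marginal p (· i) := funext fun i => funext (hπdef i)
  obtain rfl : wstar = fun i z => htWeight n (marginal p (· i)) (z i) :=
    funext fun i => funext (hws i)
  have h₁ : ∀ i, marginal p (· i) true ≠ 0 := fun i => (hπ i).1.ne'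
  have h₀ : ∀ i, marginal p (· i) false ≠ 0 := fun i => by
    have := marginal_true_add_false p (· i)
    linarith [(hπ i).2]
  refine ⟨fun i => ⟨sum_htWeight_mul_indicator n p _ (h₁ i),
    sum_htWeight n p _ (h₁ i) (h₀ i)⟩, fun w hw => ?_⟩
  simp only [mul_sum]
  rw [sum_comm]
  conv_rhs => rw [sum_comm]
  exact sum_le_sum fun i _ => sum_htWeight_sq_le n p (· i) (v i) (w i) hp0
    (fun b => (hv i b).le) (h₁ i) (h₀ i) (hw i).1 (hw i).2

/-- SUTVA, uncorrelated prior: the Horvitz–Thompson weights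
`w*ᵢ(z) = (2zᵢ - 1)/(n πᵢ(zᵢ))` satisfy the SUTVA unbiasedness constraints C1 and C2
and minimize the integrated variance `IV(w) = ∑_z p(z) ∑ᵢ wᵢ(z)² vᵢ(zᵢ)` among all
weights satisfying those constraints. -/
theorem stmt_13 (n : ℕ) (hn : 1 ≤ n)
    (p : (Fin n → Bool) → ℝ) (hp0 : ∀ z, 0 ≤ p z) (hp1 : ∑ z, p z = 1)
    (π : Fin n → Bool → ℝ)
    (hπdef : ∀ i a, π i a = ∑ z, p z * (if z i = a then (1 : ℝ) else 0))
    (hπ : ∀ i, 0 < π i true ∧ π i true < 1)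
    (v : Fin n → Bool → ℝ) (hv : ∀ i a, 0 < v i a)
    (wstar : Fin n → (Fin n → Bool) → ℝ)
    (hws : ∀ i z, wstar i z =
      ((if z i then (2 : ℝ) else 0) - 1) / ((n : ℝ) * π i (z i))) :
    ((∀ i : Fin n,
        (∑ z, p z * wstar i z * (if z i then (1 : ℝ) else 0)) = 1 / (n : ℝ) ∧
        (∑ z, p z * wstar i z) = 0) ∧
      (∀ w : Fin n → (Fin n → Bool) → ℝ,
        (∀ i : Fin n,
          (∑ z, p z * w i z * (if z i then (1 : ℝ) else 0)) = 1 / (n : ℝ) ∧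
          (∑ z, p z * w i z) = 0) →
        (∑ z, p z * ∑ i, (wstar i z) ^ 2 * v i (z i)) ≤
          (∑ z, p z * ∑ i, (w i z) ^ 2 * v i (z i)))) :=
  stmt_13_general n p hp0 hp1 π hπdef hπ v hv wstar hws
end

section
/- (SUTVA, constant prior, symmetric design.) Let σ²_α, σ²_β, σ_{αβ} be reals such that the 2×2 matrix [[σ²_α, σ_{αβ}],[σ_{αβ}, σ²_β]] is positive semidefinite, and define for each allocation z the n×n matrix Σ(z) by Σ(z)_{ij} = σ²_α + (z_i + z_j)σ_{αβ} + z_i z_j σ²_β. Let the design p be symmetric—p(z ∘ π) = p(z) for every permutation π of [n], where (z ∘ π)_i = z_{π(i)}—with p(0) = p(1) = 0 (neither the all-zero nor the all-one allocation is in the support) and with nonempty support. Consider minimizing IV(w) = ∑_z p(z) ∑_{i,j} w_i(z) w_j(z) Σ(z)_{ij} over all weights w satisfying, for every unit i, (C1) ∑_z p(z) w_i(z) z_i = 1/n and (C2) ∑_z p(z) w_i(z) = 0. Then the naive difference-of-means weights w*_i(z) = z_i/(∑_j z_j) − (1 − z_i)/(n − ∑_j z_j) satisfy the constraints and minimize IV: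 for every w satisfying C1 and C2 for all i, IV(w*) ≤ IV(w). -/
/-!
With `S = ∑ᵢ wᵢ(z)` and `T = ∑ᵢ wᵢ(z) zᵢ`, the integrand of `IV(w)` is the positive semidefinite,
hence convex, quadratic form `Q(S, T) = σ²_α S² + 2 σ_{αβ} S T + σ²_β T²`. Summing C1 and C2 over
the units gives `E[S] = 0` and `E[T] = 1`, so Jensen's inequality yields `IV(w) ≥ Q(0, 1) = σ²_β`.
The difference-of-means weights have `S = 0` and `T = 1` on the support of the design, so they
attain this bound; they satisfy C1 and C2 because, the design being symmetric, each constraint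
functional takes the same value at every unit, and the sum over the units is `E[S]` resp. `E[T]`.
-/

open Finset

def quadForm (a b c : ℝ) (v : ℝ × ℝ) : ℝ := a * v.1 ^ 2 + 2 * b * v.1 * v.2 + c * v.2 ^ 2

section QuadForm

variable {a b c : ℝ}

theorem quadForm_nonneg (ha : 0 ≤ a) (hc : 0 ≤ c) (hb : b ^ 2 ≤ a * c) (v : ℝ × ℝ) :
    0 ≤ quadForm a b c v := by
  rcases ha.eq_or_lt with rfl | ha
  · obtain rfl : b = 0 := by nlinarith
    simpa [quadForm] using mul_nonneg hc (sq_nonneg v.2)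
  · refine nonneg_of_mul_nonneg_right ?_ ha
    have : a * quadForm a b c v = (a * v.1 + b * v.2) ^ 2 + (a * c - b ^ 2) * v.2 ^ 2 := by
      unfold quadForm; ring
    rw [this]
    exact add_nonneg (sq_nonneg _) (mul_nonneg (sub_nonneg.2 hb) (sq_nonneg _))

theorem convexOn_quadForm (ha : 0 ≤ a) (hc : 0 ≤ c) (hb : b ^ 2 ≤ a * c) :
    ConvexOn ℝ Set.univ (quadForm a b c) := by
  refine ⟨convex_univ, fun x _ y _ s t hs ht hst => ?_⟩
  obtain rfl : t = 1 - s := by linarith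
  have key : s • quadForm a b c x + (1 - s) • quadForm a b c y
      - quadForm a b c (s • x + (1 - s) • y) = s * (1 - s) * quadForm a b c (x - y) := by
    simp only [quadForm, smul_eq_mul, Prod.fst_add, Prod.snd_add, Prod.smul_fst, Prod.smul_snd,
      Prod.fst_sub, Prod.snd_sub]
    ring
  linarith [mul_nonneg (mul_nonneg hs ht) (quadForm_nonneg ha hc hb (x - y))]

theorem quadForm_sum_le_sum {ι : Type*} [Fintype ι] (ha : 0 ≤ a) (hc : 0 ≤ c) (hb : b ^ 2 ≤ a * c)
    {p : ι → ℝ} (hp0 : ∀ i, 0 ≤ p i) (hp1 : ∑ i, p i = 1) (x y : ι → ℝ) :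
    quadForm a b c (∑ i, p i * x i, ∑ i, p i * y i) ≤ ∑ i, p i * quadForm a b c (x i, y i) := by
  have := (convexOn_quadForm ha hc hb).map_sum_le (t := univ) (w := p) (p := fun i => (x i, y i))
    (fun i _ => hp0 i) hp1 (fun _ _ => Set.mem_univ _)
  simpa only [Prod.smul_mk, smul_eq_mul, ← prod_mk_sum] using this

theorem sum_sum_mul_mul_eq_quadForm {ι : Type*} [Fintype ι] (v ζ : ι → ℝ) :
    ∑ i, ∑ j, v i * v j * (a + (ζ i + ζ j) * b + ζ i * ζ j * c)
      = quadForm a b c (∑ i, v i, ∑ i, v i * ζ i) := by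
  have h : ∀ i j, v i * v j * (a + (ζ i + ζ j) * b + ζ i * ζ j * c) = a * (v i * v j)
      + b * (v i * ζ i * v j) + b * (v i * (v j * ζ j)) + c * (v i * ζ i * (v j * ζ j)) := by
    intros; ring
  simp only [h, sum_add_distrib, ← mul_sum, ← sum_mul, quadForm]
  ring

end QuadForm

theorem sum_mul_eq_of_ne_zero {ι : Type*} [Fintype ι] {p f : ι → ℝ} {c : ℝ}
    (h : ∀ i, p i ≠ 0 → f i = c) : ∑ i, p i * f i = (∑ i, p i) * c := by
  rw [sum_mul]
  refine sum_congr rfl fun i _ => ?_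
  by_cases hi : p i = 0
  · simp [hi]
  · rw [h i hi]

theorem sum_comp_perm {ι β M : Type*} [Fintype ι] [DecidableEq ι] [Fintype β] [AddCommMonoid M]
    (τ : Equiv.Perm ι) (g : (ι → β) → M) : ∑ z : ι → β, g (fun i => z (τ i)) = ∑ z, g z :=
  Equiv.sum_comp (Equiv.arrowCongr τ.symm (Equiv.refl β)) g

theorem card_mul_sum_eq_sum_mul_sum {ι β : Type*} [Fintype ι] [DecidableEq ι] [Fintype β]
    {p : (ι → β) → ℝ} (hp : ∀ (τ : Equiv.Perm ι) z, p (fun i => z (τ i)) = p z)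
    {F : ι → (ι → β) → ℝ} (hF : ∀ (τ : Equiv.Perm ι) z i, F i (fun j => z (τ j)) = F (τ i) z)
    (i : ι) : Fintype.card ι * ∑ z, p z * F i z = ∑ z, p z * ∑ j, F j z := by
  have hconst : ∀ j, ∑ z, p z * F j z = ∑ z, p z * F i z := fun j => by
    rw [← sum_comp_perm (Equiv.swap i j)]
    simp only [hp, hF, Equiv.swap_apply_right]
  calc (Fintype.card ι : ℝ) * ∑ z, p z * F i z = ∑ j, ∑ z, p z * F j z := by simp [hconst]
    _ = ∑ z, p z * ∑ j, F j z := by simp only [mul_sum]; exact sum_comm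

section DiffOfMeans

variable {n : ℕ}

theorem sum_ite_eq_numTreated (z : Fin n → Bool) :
    ∑ i, (if z i then (1 : ℝ) else 0) = numTreated z := by
  rw [sum_boole, numTreated]

theorem numTreated_comp_perm (τ : Equiv.Perm (Fin n)) (z : Fin n → Bool) :
    numTreated (fun i => z (τ i)) = numTreated z :=
  card_bij' (fun i _ => τ i) (fun i _ => τ.symm i) (by simp) (by simp) (by simp) (by simp)

theorem numTreated_eq_zero_iff {z : Fin n → Bool} : numTreated z = 0 ↔ z = fun _ => false := by
  simp [numTreated, funext_iff]

theorem numTreated_eq_iff {z : Fin n → Bool} : numTreated z = n ↔ z = fun _ => true := by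
  simpa [numTreated, funext_iff] using
    card_filter_eq_iff (s := univ) (p := fun i : Fin n => z i = true)

noncomputable def diffOfMeans (i : Fin n) (z : Fin n → Bool) : ℝ :=
  (if z i then (1 : ℝ) else 0) / (numTreated z : ℝ)
    - (1 - (if z i then (1 : ℝ) else 0)) / ((n : ℝ) - (numTreated z : ℝ))

theorem diffOfMeans_comp_perm (τ : Equiv.Perm (Fin n)) (z : Fin n → Bool) (i : Fin n) :
    diffOfMeans i (fun j => z (τ j)) = diffOfMeans (τ i) z := by
  simp only [diffOfMeans, numTreated_comp_perm]

theorem sum_diffOfMeans {z : Fin n → Bool} (h0 : z ≠ fun _ => false) (h1 : z ≠ fun _ => true) :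
    ∑ i, diffOfMeans i z = 0 := by
  have hk : (numTreated z : ℝ) ≠ 0 := Nat.cast_ne_zero.2 (numTreated_eq_zero_iff.not.2 h0)
  have hnk : (n : ℝ) - numTreated z ≠ 0 :=
    sub_ne_zero.2 (Nat.cast_injective.ne (numTreated_eq_iff.not.2 h1)).symm
  simp only [diffOfMeans, sum_sub_distrib, ← sum_div, sum_ite_eq_numTreated, sum_const, card_univ,
    Fintype.card_fin, nsmul_eq_mul, mul_one, div_self hk, div_self hnk, sub_self]

theorem sum_diffOfMeans_mul_ite {z : Fin n → Bool} (h0 : z ≠ fun _ => false) :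
    ∑ i, diffOfMeans i z * (if z i then (1 : ℝ) else 0) = 1 := by
  have hk : (numTreated z : ℝ) ≠ 0 := Nat.cast_ne_zero.2 (numTreated_eq_zero_iff.not.2 h0)
  have h : ∀ i, diffOfMeans i z * (if z i then (1 : ℝ) else 0)
      = (if z i then (1 : ℝ) else 0) / numTreated z := fun i => by
    by_cases hi : z i <;> simp [diffOfMeans, hi]
  rw [sum_congr rfl fun i _ => h i, ← sum_div, sum_ite_eq_numTreated, div_self hk]

theorem sum_mul_diffOfMeans {p : (Fin n → Bool) → ℝ}
    (hsymm : ∀ (τ : Equiv.Perm (Fin n)) z, p (fun i => z (τ i)) = p z)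
    (hzero : p (fun _ => false) = 0) (hone : p (fun _ => true) = 0) (i : Fin n) :
    ∑ z, p z * diffOfMeans i z = 0 := by
  have h := card_mul_sum_eq_sum_mul_sum hsymm diffOfMeans_comp_perm i
  rw [sum_mul_eq_of_ne_zero fun z hz => sum_diffOfMeans (by rintro rfl; exact hz hzero)
    (by rintro rfl; exact hz hone), mul_zero, Fintype.card_fin] at h
  exact (mul_eq_zero.1 h).resolve_left (Nat.cast_ne_zero.2 (by rintro rfl; exact Fin.elim0 i))

theorem sum_mul_diffOfMeans_mul_ite {p : (Fin n → Bool) → ℝ}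
    (hsymm : ∀ (τ : Equiv.Perm (Fin n)) z, p (fun i => z (τ i)) = p z)
    (hzero : p (fun _ => false) = 0) (hp1 : ∑ z, p z = 1) (i : Fin n) :
    ∑ z, p z * diffOfMeans i z * (if z i then (1 : ℝ) else 0) = 1 / n := by
  have h := card_mul_sum_eq_sum_mul_sum hsymm
    (F := fun i z => diffOfMeans i z * (if z i then (1 : ℝ) else 0))
    (fun τ z i => by simp only [diffOfMeans_comp_perm]) i
  rw [sum_mul_eq_of_ne_zero fun z hz => sum_diffOfMeans_mul_ite (by rintro rfl; exact hz hzero),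
    hp1, mul_one, Fintype.card_fin] at h
  simp only [mul_assoc]
  exact eq_one_div_of_mul_eq_one_right h

end DiffOfMeans

theorem stmt_14_general (n : ℕ) (hn : 2 ≤ n)
    (p : (Fin n → Bool) → ℝ) (hp0 : ∀ z, 0 ≤ p z) (hp1 : ∑ z, p z = 1)
    (σαα σββ σαβ : ℝ)
    (hpsd : 0 ≤ σαα ∧ 0 ≤ σββ ∧ σαβ ^ 2 ≤ σαα * σββ)
    (Sig : (Fin n → Bool) → Fin n → Fin n → ℝ)
    (hSig : ∀ z i j, Sig z i j =
      σαα + ((if z i then (1 : ℝ) else 0) + (if z j then (1 : ℝ) else 0)) * σαβ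
        + (if z i then (1 : ℝ) else 0) * (if z j then (1 : ℝ) else 0) * σββ)
    (hsymm : ∀ (τ : Equiv.Perm (Fin n)) (z : Fin n → Bool), p (fun i => z (τ i)) = p z)
    (hzero : p (fun _ => false) = 0) (hone : p (fun _ => true) = 0)
    (wstar : Fin n → (Fin n → Bool) → ℝ)
    (hws : ∀ i z, wstar i z =
      (if z i then (1 : ℝ) else 0) / (numTreated z : ℝ)
        - (1 - (if z i then (1 : ℝ) else 0)) / ((n : ℝ) - (numTreated z : ℝ))) :
    ((∀ i : Fin n,
        (∑ z, p z * wstar i z * (if z i then (1 : ℝ) else 0)) = 1 / (n : ℝ) ∧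
        (∑ z, p z * wstar i z) = 0) ∧
      (∀ w : Fin n → (Fin n → Bool) → ℝ,
        (∀ i : Fin n,
          (∑ z, p z * w i z * (if z i then (1 : ℝ) else 0)) = 1 / (n : ℝ) ∧
          (∑ z, p z * w i z) = 0) →
        (∑ z, p z * ∑ i, ∑ j, wstar i z * wstar j z * Sig z i j) ≤
          (∑ z, p z * ∑ i, ∑ j, w i z * w j z * Sig z i j))) := by
  obtain ⟨hαα, hββ, hαβ⟩ := hpsd
  obtain rfl : wstar = diffOfMeans := funext₂ hws
  have hIV : ∀ w : Fin n → (Fin n → Bool) → ℝ, ∑ z, p z * ∑ i, ∑ j, w i z * w j z * Sig z i j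
      = ∑ z, p z * quadForm σαα σαβ σββ
          (∑ i, w i z, ∑ i, w i z * (if z i then (1 : ℝ) else 0)) := fun w => by
    simp only [hSig, sum_sum_mul_mul_eq_quadForm]
  refine ⟨fun i => ⟨sum_mul_diffOfMeans_mul_ite hsymm hzero hp1 i,
    sum_mul_diffOfMeans hsymm hzero hone i⟩, fun w hw => ?_⟩
  have hS : ∑ z, p z * ∑ i, w i z = 0 := by
    simp only [mul_sum]
    rw [sum_comm]
    exact sum_eq_zero fun i _ => (hw i).2
  have hT : ∑ z, p z * ∑ i, w i z * (if z i then (1 : ℝ) else 0) = 1 := by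
    simp only [mul_sum, ← mul_assoc]
    rw [sum_comm, sum_congr rfl fun i _ => (hw i).1, sum_const, card_univ, Fintype.card_fin,
      nsmul_eq_mul, mul_one_div_cancel (Nat.cast_ne_zero.2 (by omega))]
  calc ∑ z, p z * ∑ i, ∑ j, diffOfMeans i z * diffOfMeans j z * Sig z i j
      = quadForm σαα σαβ σββ (0, 1) := by
        rw [hIV, sum_mul_eq_of_ne_zero fun z hz => ?_, hp1, one_mul]
        rw [sum_diffOfMeans (by rintro rfl; exact hz hzero) (by rintro rfl; exact hz hone),
          sum_diffOfMeans_mul_ite (by rintro rfl; exact hz hzero)]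
    _ ≤ ∑ z, p z * ∑ i, ∑ j, w i z * w j z * Sig z i j := by
        have := quadForm_sum_le_sum hαα hββ hαβ hp0 hp1 (fun z => ∑ i, w i z)
          (fun z => ∑ i, w i z * (if z i then (1 : ℝ) else 0))
        rwa [hS, hT, ← hIV] at this

/-- SUTVA, constant prior, symmetric design: the naive
difference-of-means weights `w*ᵢ(z) = zᵢ/(∑ⱼ zⱼ) - (1-zᵢ)/(n - ∑ⱼ zⱼ)` satisfy the
SUTVA unbiasedness constraints C1 and C2, and minimize
`IV(w) = ∑_z p(z) ∑_{i,j} wᵢ(z) wⱼ(z) Σ(z)_{ij}` among all weights satisfying those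
constraints, where `Σ(z)_{ij} = σ²_α + (zᵢ + zⱼ)σ_{αβ} + zᵢ zⱼ σ²_β` and the design is
permutation-symmetric with neither the all-zero nor the all-one allocation in its
support. -/
theorem stmt_14 (n : ℕ) (hn : 2 ≤ n)
    (p : (Fin n → Bool) → ℝ) (hp0 : ∀ z, 0 ≤ p z) (hp1 : ∑ z, p z = 1)
    (σαα σββ σαβ : ℝ)
    (hpsd : 0 ≤ σαα ∧ 0 ≤ σββ ∧ σαβ ^ 2 ≤ σαα * σββ)
    (Sig : (Fin n → Bool) → Fin n → Fin n → ℝ)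
    (hSig : ∀ z i j, Sig z i j =
      σαα + ((if z i then (1 : ℝ) else 0) + (if z j then (1 : ℝ) else 0)) * σαβ
        + (if z i then (1 : ℝ) else 0) * (if z j then (1 : ℝ) else 0) * σββ)
    (hsymm : ∀ (τ : Equiv.Perm (Fin n)) (z : Fin n → Bool), p (fun i => z (τ i)) = p z)
    (hzero : p (fun _ => false) = 0) (hone : p (fun _ => true) = 0)
    (hsupp : ∃ z, 0 < p z)
    (wstar : Fin n → (Fin n → Bool) → ℝ)
    (hws : ∀ i z, wstar i z =
      (if z i then (1 : ℝ) else 0) / (numTreated z : ℝ)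
        - (1 - (if z i then (1 : ℝ) else 0)) / ((n : ℝ) - (numTreated z : ℝ))) :
    ((∀ i : Fin n,
        (∑ z, p z * wstar i z * (if z i then (1 : ℝ) else 0)) = 1 / (n : ℝ) ∧
        (∑ z, p z * wstar i z) = 0) ∧
      (∀ w : Fin n → (Fin n → Bool) → ℝ,
        (∀ i : Fin n,
          (∑ z, p z * w i z * (if z i then (1 : ℝ) else 0)) = 1 / (n : ℝ) ∧
          (∑ z, p z * w i z) = 0) →
        (∑ z, p z * ∑ i, ∑ j, wstar i z * wstar j z * Sig z i j) ≤
          (∑ z, p z * ∑ i, ∑ j, w i z * w j z * Sig z i j))) :=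
  stmt_14_general n hn p hp0 hp1 σαα σββ σαβ hpsd Sig hSig hsymm hzero hone wstar hws
end

section
/- (Vertex-transitive graphs, constant prior.) Let g be an undirected simple graph on [n] (symmetric adjacency matrix, no loops) that is vertex transitive: for all units i, j there is a graph automorphism τ of g with τ(i) = j. Let the design p satisfy: (1) p(τ·z) = p(z) for every automorphism τ of g and allocation z, where (τ·z)_i = z_{τ^{-1}(i)}; and (2) p(z) = 0 for every allocation z for which {d_i^z : z_i = 0} ∩ {d_i^z : z_i = 1} = ∅. Let S be a positive semidefinite (n+1)×(n+1) real matrix indexed by the symbols α, β, Γ(1), …, Γ(n−1), with entries denoted σ_{ξ,ξ′}, and set σ_{ξ,Γ(0)} = σ_{Γ(0),ξ} = 0 for every symbol ξ. Define for each allocation z the n×n matrix Σ(z) by Σ(z)_{ij} = σ_{α,α} + (z_i + z_j)σ_{α,β} + z_i z_j σ_{β,β} + σ_{Γ(d_i^z),Γ(d_j^z)} + z_i σ_{β,Γ(d_j^z)} + z_j σ_{β,Γ(d_i^z)} + σ_{α,Γ(d_i^z)} + σ_{α,Γ(d_j^z)}. For an allocation z put n_{a,d}(z) = |{i : z_i =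 a, d_i^z = d}| and C_d(z) = 1{n_{0,d}(z) > 0 and n_{1,d}(z) > 0}·(1/n_{0,d}(z) + 1/n_{1,d}(z))^{−1}. Then the stratified naive weights w*_i(z) = (C_{d_i^z}(z)/∑_d C_d(z))·(2z_i − 1)/n_{z_i,d_i^z}(z) satisfy the SANIA unbiasedness constraints C1, C2, C3′ for every unit, and minimize IV(w) = ∑_z p(z) ∑_{i,j} w_i(z) w_j(z) Σ(z)_{ij} among all weights w satisfying those constraints. -/
open Finset
open scoped Classical

/-- `τ` is a graph automorphism of `g`. -/
def IsAut {n : ℕ} (g : Fin n → Fin n → Bool) (τ : Equiv.Perm (Fin n)) : Prop :=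
  ∀ a b, g a b = g (τ a) (τ b)

/-- `n_{a,d}(z)`: the number of units with treatment `a` and treated degree `d`. -/
def ncount {n : ℕ} (g : Fin n → Fin n → Bool) (z : Fin n → Bool) (a : Bool) (d : ℕ) : ℕ :=
  (Finset.univ.filter fun i => z i = a ∧ trDeg g z i = d).card

/-!
Write `φᵢ(z) = (1, zᵢ, 1{dᵢᶻ = ·})` for the loadings of unit `i`'s outcome on `(α, β, Γ(·))`.
Then `Σ(z)ᵢⱼ = S(φᵢ(z), φⱼ(z))`, so `IV(w) = E_p[S(v, v)]` with `v(z) = ∑ᵢ wᵢ(z) φᵢ(z)`.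
Within each degree stratum the treated and the control naive weights cancel, so on the
support of `p` the stratified naive weights give `v = e_β` and `IV(w*) = σ_ββ`. For any `w`
satisfying C1, C2, C3′ one has `E_p[v] = e_β` on the coordinates `S` sees, and Jensen's
inequality for the positive semidefinite form `S` gives `IV(w) ≥ S(e_β, e_β) = σ_ββ`.

Unbiasedness of `w*` comes from the per-allocation identities by symmetry: `p` and `w*` are
invariant under automorphisms, which act transitively on units, so each unit's moment is
`1/n` times the moment summed over units.
-/
theorem LinearMap.BilinForm.apply_sum_smul_sum_smul {R M ι : Type*} [CommRing R] [AddCommGroup M]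
    [Module R M] [Fintype ι] (B : LinearMap.BilinForm R M) (c : ι → R) (x : ι → M) :
    B (∑ i, c i • x i) (∑ j, c j • x j) = ∑ i, ∑ j, c i * c j * B (x i) (x j) := by
  simp only [map_sum, map_smul, LinearMap.sum_apply, LinearMap.smul_apply, smul_eq_mul,
    mul_sum, mul_assoc]
  rw [sum_comm]
  exact sum_congr rfl fun _ _ => sum_congr rfl fun _ _ => mul_left_comm _ _ _

theorem LinearMap.BilinForm.apply_sum_smul_self_le_sum {M X : Type*} [AddCommGroup M]
    [Module ℝ M] [Fintype X] (B : LinearMap.BilinForm ℝ M) (hB : ∀ x, 0 ≤ B x x)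
    {p : X → ℝ} (hp0 : ∀ z, 0 ≤ p z) (hp1 : ∑ z, p z = 1) (v : X → M) :
    B (∑ z, p z • v z) (∑ z, p z • v z) ≤ ∑ z, p z * B (v z) (v z) := by
  set m := ∑ z, p z • v z
  have hl : ∑ z, p z * B (v z) m = B m m := by
    show _ = B (∑ z, p z • v z) m; simp [map_sum, map_smul, LinearMap.sum_apply]
  have hr : ∑ z, p z * B m (v z) = B m m := by
    show _ = B m (∑ z, p z • v z); simp [map_sum, map_smul]
  have hvar : ∑ z, p z * B (v z - m) (v z - m) = ∑ z, p z * B (v z) (v z) - B m m := by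
    simp only [map_sub, LinearMap.sub_apply, mul_sub, sum_sub_distrib, hl, hr, ← sum_mul, hp1]
    ring
  have := sum_nonneg fun z (_ : z ∈ univ) => mul_nonneg (hp0 z) (hB (v z - m))
  linarith

section TreatedDegree

variable {n : ℕ} {g : Fin n → Fin n → Bool}

theorem trDeg_le_sub_one (hloop : ∀ i, g i i = false) (z : Fin n → Bool) (i : Fin n) :
    trDeg g z i ≤ n - 1 := by
  have hsub : univ.filter (fun j => g j i = true ∧ z j = true) ⊆ univ.erase i :=
    fun j hj => mem_erase.2 ⟨by rintro rfl; simp [hloop] at hj, mem_univ j⟩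
  simpa [trDeg, card_erase_of_mem] using card_le_card hsub

theorem trDeg_mem_range (hloop : ∀ i, g i i = false) (z : Fin n → Bool) (i : Fin n) :
    trDeg g z i ∈ range n :=
  mem_range.2 (by have := trDeg_le_sub_one hloop z i; have := i.pos; omega)

variable {τ : Equiv.Perm (Fin n)}

theorem trDeg_perm (hτ : IsAut g τ) (z : Fin n → Bool) (i : Fin n) :
    trDeg g (fun k => z (τ.symm k)) (τ i) = trDeg g z i :=
  card_equiv τ.symm fun j => by simp [hτ (τ.symm j) i]

theorem ncount_perm (hτ : IsAut g τ) (z : Fin n → Bool) (a : Bool) (d : ℕ) :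
    ncount g (fun k => z (τ.symm k)) a d = ncount g z a d :=
  card_equiv τ.symm fun j => by simp [← trDeg_perm hτ z (τ.symm j)]

end TreatedDegree

section Covariance

variable (m : ℕ) (σαα σαβ σββ : ℝ) (σαΓ σβΓ : ℕ → ℝ) (σΓΓ : ℕ → ℕ → ℝ)

/-- The prior covariance `S` as a bilinear form on coordinates `(α, β, Γ(·))`; only the
coordinates `Γ(1), …, Γ(m)` enter. -/
def covForm : LinearMap.BilinForm ℝ (ℝ × ℝ × (ℕ → ℝ)) :=
  LinearMap.mk₂ ℝ (fun x y => x.1 * y.1 * σαα + (x.1 * y.2.1 + x.2.1 * y.1) * σαβ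
      + x.2.1 * y.2.1 * σββ
      + ∑ d ∈ Icc 1 m, (x.1 * y.2.2 d + x.2.2 d * y.1) * σαΓ d
      + ∑ d ∈ Icc 1 m, (x.2.1 * y.2.2 d + x.2.2 d * y.2.1) * σβΓ d
      + ∑ d ∈ Icc 1 m, ∑ d' ∈ Icc 1 m, x.2.2 d * y.2.2 d' * σΓΓ d d')
    (fun x x' y => by
      simp only [Prod.fst_add, Prod.snd_add, Pi.add_apply, add_mul, sum_add_distrib]
      ring)
    (fun c x y => by
      simp only [Prod.smul_fst, Prod.smul_snd, Pi.smul_apply, smul_eq_mul, mul_add, mul_sum]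
      ring_nf)
    (fun x y y' => by
      simp only [Prod.fst_add, Prod.snd_add, Pi.add_apply, mul_add, add_mul, sum_add_distrib]
      ring)
    (fun c x y => by
      simp only [Prod.smul_fst, Prod.smul_snd, Pi.smul_apply, smul_eq_mul, mul_add, mul_sum]
      ring_nf)

variable {m σαα σαβ σββ σαΓ σβΓ σΓΓ}

theorem covForm_apply_self (a b : ℝ) (c : ℕ → ℝ) :
    covForm m σαα σαβ σββ σαΓ σβΓ σΓΓ (a, b, c) (a, b, c) =
      a ^ 2 * σαα + 2 * a * b * σαβ + b ^ 2 * σββ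
        + 2 * a * ∑ d ∈ Icc 1 m, c d * σαΓ d
        + 2 * b * ∑ d ∈ Icc 1 m, c d * σβΓ d
        + ∑ d ∈ Icc 1 m, ∑ d' ∈ Icc 1 m, c d * c d' * σΓΓ d d' := by
  simp only [covForm, LinearMap.mk₂_apply, mul_sum]
  ring_nf

theorem covForm_zero_one {c : ℕ → ℝ} (hc : ∀ d, 1 ≤ d → c d = 0) :
    covForm m σαα σαβ σββ σαΓ σβΓ σΓΓ (0, 1, c) (0, 1, c) = σββ := by
  rw [covForm_apply_self, sum_eq_zero fun d hd => by rw [hc d (mem_Icc.1 hd).1, zero_mul],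
    sum_eq_zero fun d hd => by rw [hc d (mem_Icc.1 hd).1, zero_mul],
    sum_eq_zero fun d hd => sum_eq_zero fun d' _ => by rw [hc d (mem_Icc.1 hd).1]; ring]
  ring

end Covariance

section Loadings

variable {n : ℕ} {g : Fin n → Fin n → Bool}
variable {σαα σαβ σββ : ℝ} {σαΓ σβΓ : ℕ → ℝ} {σΓΓ : ℕ → ℕ → ℝ}

/-- The loadings `(1, zᵢ, 1{dᵢᶻ = ·})` of unit `i`'s outcome on `(α, β, Γ(·))`. -/
def unitFeature (g : Fin n → Fin n → Bool) (z : Fin n → Bool) (i : Fin n) :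
    ℝ × ℝ × (ℕ → ℝ) :=
  (1, if z i then 1 else 0, fun d => if trDeg g z i = d then 1 else 0)

theorem covForm_unitFeature (hloop : ∀ i, g i i = false) (hΓΓsym : ∀ d d', σΓΓ d d' = σΓΓ d' d)
    (hΓ0 : σαΓ 0 = 0 ∧ σβΓ 0 = 0 ∧ ∀ d, σΓΓ d 0 = 0) (z : Fin n → Bool) (i j : Fin n) :
    covForm (n - 1) σαα σαβ σββ σαΓ σβΓ σΓΓ (unitFeature g z i) (unitFeature g z j) =
      σαα + ((if z i then (1 : ℝ) else 0) + (if z j then (1 : ℝ) else 0)) * σαβ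
        + (if z i then (1 : ℝ) else 0) * (if z j then (1 : ℝ) else 0) * σββ
        + σΓΓ (trDeg g z i) (trDeg g z j)
        + (if z i then (1 : ℝ) else 0) * σβΓ (trDeg g z j)
        + (if z j then (1 : ℝ) else 0) * σβΓ (trDeg g z i)
        + σαΓ (trDeg g z i) + σαΓ (trDeg g z j) := by
  obtain ⟨hα, hβ, hΓ⟩ := hΓ0
  have hle := trDeg_le_sub_one hloop z
  have hΓ' : ∀ d, σΓΓ 0 d = 0 := fun d => hΓΓsym 0 d ▸ hΓ d
  -- `dᵢᶻ ≤ n - 1`, and `σ_{·,Γ(0)} = 0` covers `dᵢᶻ = 0`, which `Icc 1 (n - 1)` misses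
  simp only [covForm, unitFeature, LinearMap.mk₂_apply, add_mul, sum_add_distrib, ite_mul,
    mul_ite, one_mul, zero_mul, mul_one, mul_zero]
  cases z i <;> cases z j <;> simp [sum_ite_eq, hle] <;> split_ifs <;> simp_all <;> ring

theorem sum_smul_unitFeature (g : Fin n → Fin n → Bool) (z : Fin n → Bool)
    (c : Fin n → ℝ) :
    ∑ i, c i • unitFeature g z i = (∑ i, c i, ∑ i, c i * (if z i then 1 else 0),
      fun d => ∑ i, c i * (if trDeg g z i = d then 1 else 0)) := by
  ext <;> simp [unitFeature, Prod.fst_sum, Prod.snd_sum, Finset.sum_apply]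

theorem sum_smul_sum_smul_unitFeature (g : Fin n → Fin n → Bool)
    (p : (Fin n → Bool) → ℝ) (w : Fin n → (Fin n → Bool) → ℝ) :
    ∑ z, p z • ∑ i, w i z • unitFeature g z i =
      (∑ i, ∑ z, p z * w i z, ∑ i, ∑ z, p z * w i z * (if z i then 1 else 0),
        fun d => ∑ i, ∑ z, p z * w i z * (if trDeg g z i = d then 1 else 0)) := by
  simp only [sum_smul_unitFeature, Prod.smul_mk, smul_eq_mul]
  ext <;> simp [Prod.fst_sum, Prod.snd_sum, Finset.sum_apply, mul_sum, sum_comm (γ := Fin n)]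

theorem le_sum_mul_covForm_of_constraints {m : ℕ}
    (hS : ∀ x, 0 ≤ covForm m σαα σαβ σββ σαΓ σβΓ σΓΓ x x) (hn : n ≠ 0)
    {p : (Fin n → Bool) → ℝ} (hp0 : ∀ z, 0 ≤ p z) (hp1 : ∑ z, p z = 1)
    {w : Fin n → (Fin n → Bool) → ℝ}
    (hw : ∀ i : Fin n,
      (∑ z, p z * w i z * (if z i then (1 : ℝ) else 0)) = 1 / (n : ℝ) ∧
      (∑ z, p z * w i z) = 0 ∧
      (∀ d : ℕ, 1 ≤ d →
        (∑ z, p z * w i z * (if trDeg g z i = d then (1 : ℝ) else 0)) = 0)) :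
    σββ ≤ ∑ z, p z * covForm m σαα σαβ σββ σαΓ σβΓ σΓΓ
      (∑ i, w i z • unitFeature g z i) (∑ i, w i z • unitFeature g z i) := by
  have hmean : ∑ z, p z • ∑ i, w i z • unitFeature g z i =
      (0, 1, fun d => ∑ i, ∑ z, p z * w i z * (if trDeg g z i = d then 1 else 0)) := by
    rw [sum_smul_sum_smul_unitFeature, sum_eq_zero fun i _ => (hw i).2.1,
      sum_congr rfl fun i _ => (hw i).1, sum_const, card_univ, Fintype.card_fin, nsmul_eq_mul,
      mul_one_div_cancel (Nat.cast_ne_zero.2 hn)]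
  calc σββ = covForm m σαα σαβ σββ σαΓ σβΓ σΓΓ (∑ z, p z • ∑ i, w i z • unitFeature g z i)
        (∑ z, p z • ∑ i, w i z • unitFeature g z i) := by
        rw [hmean, covForm_zero_one fun d hd => sum_eq_zero fun i _ => (hw i).2.2 d hd]
    _ ≤ _ := (covForm m σαα σαβ σββ σαΓ σβΓ σΓΓ).apply_sum_smul_self_le_sum hS hp0 hp1 _

end Loadings

section NaiveWeights

variable {n : ℕ} {g : Fin n → Fin n → Bool}

/-- The stratum weight `C_d(z)`. -/
noncomputable def strataWeight (g : Fin n → Fin n → Bool) (z : Fin n → Bool) (d : ℕ) : ℝ :=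
  if 0 < ncount g z false d ∧ 0 < ncount g z true d
  then ((1 / (ncount g z false d : ℝ)) + 1 / (ncount g z true d : ℝ))⁻¹
  else 0

/-- The stratified naive weight `w*ᵢ(z)`. -/
noncomputable def naiveWeight (g : Fin n → Fin n → Bool) (z : Fin n → Bool) (i : Fin n) : ℝ :=
  (strataWeight g z (trDeg g z i) / ∑ d ∈ Finset.range n, strataWeight g z d) *
    ((if z i then (2 : ℝ) else 0) - 1) / (ncount g z (z i) (trDeg g z i) : ℝ)

theorem strataWeight_nonneg (z : Fin n → Bool) (d : ℕ) : 0 ≤ strataWeight g z d := by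
  unfold strataWeight
  split_ifs <;> positivity

theorem strataWeight_eq_zero_of_ncount_eq_zero {z : Fin n → Bool} {a : Bool} {d : ℕ}
    (h : ncount g z a d = 0) : strataWeight g z d = 0 := by
  unfold strataWeight
  rw [if_neg]
  cases a <;> omega

theorem sum_strataWeight_pos (hloop : ∀ i, g i i = false) {z : Fin n → Bool}
    (h : ∃ d : ℕ, (∃ i, z i = false ∧ trDeg g z i = d) ∧ (∃ i, z i = true ∧ trDeg g z i = d)) :
    0 < ∑ d ∈ range n, strataWeight g z d := by
  obtain ⟨_, ⟨i, hi, rfl⟩, ⟨j, hj, hd⟩⟩ := h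
  have h0 : 0 < ncount g z false (trDeg g z i) := card_pos.2 ⟨i, by simp [hi]⟩
  have h1 : 0 < ncount g z true (trDeg g z i) := card_pos.2 ⟨j, by simp [hj, hd]⟩
  refine sum_pos' (fun d _ => strataWeight_nonneg z d) ⟨_, trDeg_mem_range hloop z i, ?_⟩
  rw [strataWeight, if_pos ⟨h0, h1⟩]
  positivity

theorem sum_filter_div_ncount (hloop : ∀ i, g i i = false) (z : Fin n → Bool) (a : Bool)
    {h : ℕ → ℝ} (hh : ∀ d, ncount g z a d = 0 → h d = 0) :
    ∑ i with z i = a, h (trDeg g z i) / ncount g z a (trDeg g z i) = ∑ d ∈ range n, h d := by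
  have hfiber : ∀ i ∈ univ.filter (z · = a), h (trDeg g z i) =
      ∑ j ∈ univ.filter (z · = a) with trDeg g z j = trDeg g z i,
        h (trDeg g z j) / ncount g z a (trDeg g z j) := by
    intro i hi
    have hcard : #{j ∈ univ.filter (z · = a) | trDeg g z j = trDeg g z i} =
        ncount g z a (trDeg g z i) := by rw [filter_filter]; rfl
    have hne : (ncount g z a (trDeg g z i) : ℝ) ≠ 0 :=
      Nat.cast_ne_zero.2 (card_ne_zero_of_mem (mem_filter.2 ⟨mem_univ i, (mem_filter.1 hi).2, rfl⟩))
    rw [sum_congr rfl fun j hj => by rw [(mem_filter.1 hj).2], sum_const, hcard, nsmul_eq_mul,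
      mul_div_cancel₀ _ hne]
  rw [← sum_image' _ hfiber]
  refine sum_subset (fun d hd => ?_) (fun d _ hd => hh d ?_)
  · obtain ⟨i, -, rfl⟩ := mem_image.1 hd
    exact trDeg_mem_range hloop z i
  · refine card_eq_zero.2 (eq_empty_of_forall_notMem fun i hi => hd (mem_image.2 ⟨i, ?_⟩))
    simpa using hi

theorem sum_naiveWeight_mul (hloop : ∀ i, g i i = false) (z : Fin n → Bool)
    (r : Bool → ℕ → ℝ) :
    ∑ i, naiveWeight g z i * r (z i) (trDeg g z i) =
      ∑ d ∈ range n, strataWeight g z d / (∑ d' ∈ range n, strataWeight g z d') *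
        (r true d - r false d) := by
  set T := ∑ d' ∈ range n, strataWeight g z d'
  have htreated : ∑ i with z i = true, naiveWeight g z i * r (z i) (trDeg g z i) =
      ∑ d ∈ range n, strataWeight g z d / T * r true d := by
    rw [← sum_filter_div_ncount hloop z true fun d hd => by
      rw [strataWeight_eq_zero_of_ncount_eq_zero hd, zero_div, zero_mul]]
    refine sum_congr rfl fun i hi => ?_
    simp only [naiveWeight, (mem_filter.1 hi).2, if_true]
    ring
  have hcontrol : ∑ i with z i = false, naiveWeight g z i * r (z i) (trDeg g z i) =
      ∑ d ∈ range n, -(strataWeight g z d / T * r false d) := by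
    rw [← sum_filter_div_ncount hloop z false fun d hd => by
      rw [strataWeight_eq_zero_of_ncount_eq_zero hd, zero_div, zero_mul, neg_zero]]
    refine sum_congr rfl fun i hi => ?_
    simp only [naiveWeight, (mem_filter.1 hi).2, Bool.false_eq_true, if_false]
    ring
  rw [← sum_filter_add_sum_filter_not univ (z · = true)]
  simp only [Bool.not_eq_true, htreated, hcontrol, ← sum_add_distrib]
  exact sum_congr rfl fun d _ => by ring

theorem sum_naiveWeight (hloop : ∀ i, g i i = false) (z : Fin n → Bool) :
    ∑ i, naiveWeight g z i = 0 := by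
  simpa using sum_naiveWeight_mul hloop z fun _ _ => 1

theorem sum_naiveWeight_mul_treated (hloop : ∀ i, g i i = false) {z : Fin n → Bool}
    (hT : ∑ d ∈ range n, strataWeight g z d ≠ 0) :
    ∑ i, naiveWeight g z i * (if z i then 1 else 0) = 1 := by
  rw [sum_naiveWeight_mul hloop z fun a _ => if a then 1 else 0]
  simp [← sum_div, div_self hT]

theorem sum_naiveWeight_mul_stratum (hloop : ∀ i, g i i = false) (z : Fin n → Bool) (d : ℕ) :
    ∑ i, naiveWeight g z i * (if trDeg g z i = d then 1 else 0) = 0 := by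
  simpa using sum_naiveWeight_mul hloop z fun _ e => if e = d then 1 else 0

theorem sum_naiveWeight_smul_unitFeature (hloop : ∀ i, g i i = false) {z : Fin n → Bool}
    (hT : ∑ d ∈ range n, strataWeight g z d ≠ 0) :
    ∑ i, naiveWeight g z i • unitFeature g z i = (0, 1, 0) := by
  rw [sum_smul_unitFeature, sum_naiveWeight hloop, sum_naiveWeight_mul_treated hloop hT]
  exact congrArg _ (congrArg _ (funext (sum_naiveWeight_mul_stratum hloop z)))

theorem naiveWeight_perm {τ : Equiv.Perm (Fin n)} (hτ : IsAut g τ) (z : Fin n → Bool)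
    (i : Fin n) : naiveWeight g (fun k => z (τ.symm k)) (τ i) = naiveWeight g z i := by
  simp [naiveWeight, strataWeight, trDeg_perm hτ, ncount_perm hτ]

theorem sum_mul_covForm_naiveWeight {m : ℕ} {σαα σαβ σββ : ℝ} {σαΓ σβΓ : ℕ → ℝ}
    {σΓΓ : ℕ → ℕ → ℝ} (hloop : ∀ i, g i i = false) {p : (Fin n → Bool) → ℝ}
    (hp1 : ∑ z, p z = 1)
    (hT : ∀ z, p z ≠ 0 → ∑ d ∈ range n, strataWeight g z d ≠ 0) :
    ∑ z, p z * covForm m σαα σαβ σββ σαΓ σβΓ σΓΓ (∑ i, naiveWeight g z i • unitFeature g z i)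
      (∑ i, naiveWeight g z i • unitFeature g z i) = σββ := by
  refine (sum_congr rfl fun z _ => ?_).trans (by rw [← sum_mul, hp1, one_mul])
  by_cases hz : p z = 0
  · simp [hz]
  · rw [sum_naiveWeight_smul_unitFeature hloop (hT z hz), covForm_zero_one (c := 0) fun _ _ => rfl]

end NaiveWeights

section Symmetry

variable {n : ℕ} {g : Fin n → Fin n → Bool} {p : (Fin n → Bool) → ℝ}

theorem mul_sum_mul_apply_of_vertexTransitive
    (hvt : ∀ i j : Fin n, ∃ τ : Equiv.Perm (Fin n), IsAut g τ ∧ τ i = j)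
    (hpaut : ∀ τ : Equiv.Perm (Fin n), IsAut g τ → ∀ z, p (fun i => z (τ.symm i)) = p z)
    {ψ : (Fin n → Bool) → Fin n → ℝ}
    (hψ : ∀ τ : Equiv.Perm (Fin n), IsAut g τ → ∀ z i, ψ (fun k => z (τ.symm k)) (τ i) = ψ z i)
    (i : Fin n) :
    (n : ℝ) * ∑ z, p z * ψ z i = ∑ z, p z * ∑ j, ψ z j := by
  have hconst : ∀ j, ∑ z, p z * ψ z j = ∑ z, p z * ψ z i := by
    intro j
    obtain ⟨τ, hτ, rfl⟩ := hvt i j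
    rw [← (τ.arrowCongr (Equiv.refl Bool)).sum_comp]
    exact sum_congr rfl fun z _ => by
      rw [show τ.arrowCongr (Equiv.refl Bool) z = fun k => z (τ.symm k) from rfl, hpaut τ hτ,
        hψ τ hτ]
  calc (n : ℝ) * ∑ z, p z * ψ z i = ∑ j, ∑ z, p z * ψ z j := by simp [hconst]
    _ = ∑ z, p z * ∑ j, ψ z j := by simp only [mul_sum]; exact sum_comm

theorem naiveWeight_unbiased (hloop : ∀ i, g i i = false)
    (hvt : ∀ i j : Fin n, ∃ τ : Equiv.Perm (Fin n), IsAut g τ ∧ τ i = j)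
    (hpaut : ∀ τ : Equiv.Perm (Fin n), IsAut g τ → ∀ z, p (fun i => z (τ.symm i)) = p z)
    (hp1 : ∑ z, p z = 1) (hT : ∀ z, p z ≠ 0 → ∑ d ∈ range n, strataWeight g z d ≠ 0)
    (i : Fin n) :
    (∑ z, p z * naiveWeight g z i * (if z i then (1 : ℝ) else 0)) = 1 / (n : ℝ) ∧
      (∑ z, p z * naiveWeight g z i) = 0 ∧
      (∀ d : ℕ, 1 ≤ d →
        (∑ z, p z * naiveWeight g z i * (if trDeg g z i = d then (1 : ℝ) else 0)) = 0) := by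
  have hn0 : (n : ℝ) ≠ 0 := Nat.cast_ne_zero.2 i.pos.ne'
  have hmoment (r : Bool → ℕ → ℝ) :
      (n : ℝ) * ∑ z, p z * naiveWeight g z i * r (z i) (trDeg g z i) =
        ∑ z, p z * ∑ j, naiveWeight g z j * r (z j) (trDeg g z j) := by
    simp only [mul_assoc]
    exact mul_sum_mul_apply_of_vertexTransitive
      (ψ := fun z i => naiveWeight g z i * r (z i) (trDeg g z i)) hvt hpaut
      (fun τ hτ z i => by simp [naiveWeight_perm hτ, trDeg_perm hτ]) i
  refine ⟨eq_one_div_of_mul_eq_one_right ?_, ?_, fun d _ => ?_⟩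
  · rw [hmoment fun a _ => if a then 1 else 0]
    refine (sum_congr rfl fun z _ => ?_).trans hp1
    by_cases hz : p z = 0
    · simp [hz]
    · rw [sum_naiveWeight_mul_treated hloop (hT z hz), mul_one]
  · have h := hmoment fun _ _ => 1
    simp only [mul_one, sum_naiveWeight hloop, mul_zero, sum_const_zero] at h
    exact (mul_eq_zero.1 h).resolve_left hn0
  · have h := hmoment fun _ e => if e = d then 1 else 0
    simp only [sum_naiveWeight_mul_stratum hloop, mul_zero, sum_const_zero] at h
    exact (mul_eq_zero.1 h).resolve_left hn0

end Symmetry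

theorem stmt_17_general (n : ℕ) (hn : 2 ≤ n)
    (g : Fin n → Fin n → Bool)
    (hloop : ∀ i, g i i = false)
    (hvt : ∀ i j : Fin n, ∃ τ : Equiv.Perm (Fin n), IsAut g τ ∧ τ i = j)
    (p : (Fin n → Bool) → ℝ) (hp0 : ∀ z, 0 ≤ p z) (hp1 : ∑ z, p z = 1)
    -- (1) the design is invariant under automorphisms of `g`
    (hpaut : ∀ τ : Equiv.Perm (Fin n), IsAut g τ →
      ∀ z : Fin n → Bool, p (fun i => z (τ.symm i)) = p z)
    -- (2) allocations with disjoint treated-degree sets for treated/control units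
    -- are excluded from the support
    (hpbal : ∀ z : Fin n → Bool,
      (¬ ∃ d : ℕ, (∃ i, z i = false ∧ trDeg g z i = d) ∧
        (∃ i, z i = true ∧ trDeg g z i = d)) → p z = 0)
    -- entries of the prior covariance `S`, with `σ_{ξ,Γ(0)} = 0`
    (σαα σαβ σββ : ℝ) (σαΓ σβΓ : ℕ → ℝ) (σΓΓ : ℕ → ℕ → ℝ)
    (hΓΓsym : ∀ d d', σΓΓ d d' = σΓΓ d' d)
    (hΓ0 : σαΓ 0 = 0 ∧ σβΓ 0 = 0 ∧ ∀ d, σΓΓ d 0 = 0)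
    -- positive semidefiniteness of `S`, expressed via its quadratic form on
    -- (α, β, Γ(1), …, Γ(n-1))
    (hPSD : ∀ (a b : ℝ) (c : ℕ → ℝ),
      0 ≤ a ^ 2 * σαα + 2 * a * b * σαβ + b ^ 2 * σββ
        + 2 * a * ∑ d ∈ Finset.Icc 1 (n - 1), c d * σαΓ d
        + 2 * b * ∑ d ∈ Finset.Icc 1 (n - 1), c d * σβΓ d
        + ∑ d ∈ Finset.Icc 1 (n - 1), ∑ d' ∈ Finset.Icc 1 (n - 1),
            c d * c d' * σΓΓ d d')
    -- the covariance matrix `Σ(z)` of the observed outcomes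
    (Sig : (Fin n → Bool) → Fin n → Fin n → ℝ)
    (hSig : ∀ z i j, Sig z i j =
      σαα + ((if z i then (1 : ℝ) else 0) + (if z j then (1 : ℝ) else 0)) * σαβ
        + (if z i then (1 : ℝ) else 0) * (if z j then (1 : ℝ) else 0) * σββ
        + σΓΓ (trDeg g z i) (trDeg g z j)
        + (if z i then (1 : ℝ) else 0) * σβΓ (trDeg g z j)
        + (if z j then (1 : ℝ) else 0) * σβΓ (trDeg g z i)
        + σαΓ (trDeg g z i) + σαΓ (trDeg g z j))
    -- the strata weights `C_d(z)`
    (Cd : (Fin n → Bool) → ℕ → ℝ)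
    (hCd : ∀ z d, Cd z d =
      if 0 < ncount g z false d ∧ 0 < ncount g z true d
      then ((1 / (ncount g z false d : ℝ)) + 1 / (ncount g z true d : ℝ))⁻¹
      else 0)
    -- the stratified naive weights
    (wstar : Fin n → (Fin n → Bool) → ℝ)
    (hws : ∀ i z, wstar i z =
      (Cd z (trDeg g z i) / ∑ d ∈ Finset.range n, Cd z d) *
        ((if z i then (2 : ℝ) else 0) - 1) / (ncount g z (z i) (trDeg g z i) : ℝ)) :
    ((∀ i : Fin n,
        (∑ z, p z * wstar i z * (if z i then (1 : ℝ) else 0)) = 1 / (n : ℝ) ∧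
        (∑ z, p z * wstar i z) = 0 ∧
        (∀ d : ℕ, 1 ≤ d →
          (∑ z, p z * wstar i z * (if trDeg g z i = d then (1 : ℝ) else 0)) = 0)) ∧
      (∀ w : Fin n → (Fin n → Bool) → ℝ,
        (∀ i : Fin n,
          (∑ z, p z * w i z * (if z i then (1 : ℝ) else 0)) = 1 / (n : ℝ) ∧
          (∑ z, p z * w i z) = 0 ∧
          (∀ d : ℕ, 1 ≤ d →
            (∑ z, p z * w i z * (if trDeg g z i = d then (1 : ℝ) else 0)) = 0)) →
        (∑ z, p z * ∑ i, ∑ j, wstar i z * wstar j z * Sig z i j) ≤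
          (∑ z, p z * ∑ i, ∑ j, w i z * w j z * Sig z i j))) := by
  obtain rfl : Cd = strataWeight g := funext₂ hCd
  obtain rfl : wstar = fun i z => naiveWeight g z i := funext₂ hws
  have hT : ∀ z, p z ≠ 0 → ∑ d ∈ range n, strataWeight g z d ≠ 0 := fun z hz =>
    (sum_strataWeight_pos hloop (not_not.1 (mt (hpbal z) hz))).ne'
  have hS (x : ℝ × ℝ × (ℕ → ℝ)) : 0 ≤ covForm (n - 1) σαα σαβ σββ σαΓ σβΓ σΓΓ x x := by
    obtain ⟨a, b, c⟩ := x
    rw [covForm_apply_self]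
    exact hPSD a b c
  have hIV (u : Fin n → (Fin n → Bool) → ℝ) :
      ∑ z, p z * ∑ i, ∑ j, u i z * u j z * Sig z i j =
        ∑ z, p z * covForm (n - 1) σαα σαβ σββ σαΓ σβΓ σΓΓ (∑ i, u i z • unitFeature g z i)
          (∑ i, u i z • unitFeature g z i) := by
    simp only [LinearMap.BilinForm.apply_sum_smul_sum_smul,
      covForm_unitFeature hloop hΓΓsym hΓ0, hSig]
  refine ⟨naiveWeight_unbiased hloop hvt hpaut hp1 hT, fun w hw => ?_⟩
  rw [hIV, hIV, sum_mul_covForm_naiveWeight hloop hp1 hT]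
  exact le_sum_mul_covForm_of_constraints hS (by omega) hp0 hp1 hw

/-- vertex-transitive graphs, constant prior: for a vertex-transitive
undirected simple graph, an automorphism-invariant design placing no mass on
allocations whose treated and control treated-degree sets are disjoint, and a
constant (across units) mean-zero prior with positive semidefinite covariance `S`,
the stratified naive weights satisfy the SANIA unbiasedness constraints C1, C2, C3′
and minimize `IV(w) = ∑_z p(z) ∑_{i,j} wᵢ(z) wⱼ(z) Σ(z)_{ij}` among all weights
satisfying those constraints. -/
theorem stmt_17 (n : ℕ) (hn : 2 ≤ n)
    (g : Fin n → Fin n → Bool)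
    (hsym : ∀ i j, g i j = g j i) (hloop : ∀ i, g i i = false)
    (hvt : ∀ i j : Fin n, ∃ τ : Equiv.Perm (Fin n), IsAut g τ ∧ τ i = j)
    (p : (Fin n → Bool) → ℝ) (hp0 : ∀ z, 0 ≤ p z) (hp1 : ∑ z, p z = 1)
    -- (1) the design is invariant under automorphisms of `g`
    (hpaut : ∀ τ : Equiv.Perm (Fin n), IsAut g τ →
      ∀ z : Fin n → Bool, p (fun i => z (τ.symm i)) = p z)
    -- (2) allocations with disjoint treated-degree sets for treated/control units
    -- are excluded from the support
    (hpbal : ∀ z : Fin n → Bool,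
      (¬ ∃ d : ℕ, (∃ i, z i = false ∧ trDeg g z i = d) ∧
        (∃ i, z i = true ∧ trDeg g z i = d)) → p z = 0)
    -- entries of the prior covariance `S`, with `σ_{ξ,Γ(0)} = 0`
    (σαα σαβ σββ : ℝ) (σαΓ σβΓ : ℕ → ℝ) (σΓΓ : ℕ → ℕ → ℝ)
    (hΓΓsym : ∀ d d', σΓΓ d d' = σΓΓ d' d)
    (hΓ0 : σαΓ 0 = 0 ∧ σβΓ 0 = 0 ∧ ∀ d, σΓΓ d 0 = 0)
    -- positive semidefiniteness of `S`, expressed via its quadratic form on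
    -- (α, β, Γ(1), …, Γ(n-1))
    (hPSD : ∀ (a b : ℝ) (c : ℕ → ℝ),
      0 ≤ a ^ 2 * σαα + 2 * a * b * σαβ + b ^ 2 * σββ
        + 2 * a * ∑ d ∈ Finset.Icc 1 (n - 1), c d * σαΓ d
        + 2 * b * ∑ d ∈ Finset.Icc 1 (n - 1), c d * σβΓ d
        + ∑ d ∈ Finset.Icc 1 (n - 1), ∑ d' ∈ Finset.Icc 1 (n - 1),
            c d * c d' * σΓΓ d d')
    -- the covariance matrix `Σ(z)` of the observed outcomes
    (Sig : (Fin n → Bool) → Fin n → Fin n → ℝ)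
    (hSig : ∀ z i j, Sig z i j =
      σαα + ((if z i then (1 : ℝ) else 0) + (if z j then (1 : ℝ) else 0)) * σαβ
        + (if z i then (1 : ℝ) else 0) * (if z j then (1 : ℝ) else 0) * σββ
        + σΓΓ (trDeg g z i) (trDeg g z j)
        + (if z i then (1 : ℝ) else 0) * σβΓ (trDeg g z j)
        + (if z j then (1 : ℝ) else 0) * σβΓ (trDeg g z i)
        + σαΓ (trDeg g z i) + σαΓ (trDeg g z j))
    -- the strata weights `C_d(z)`
    (Cd : (Fin n → Bool) → ℕ → ℝ)
    (hCd : ∀ z d, Cd z d =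
      if 0 < ncount g z false d ∧ 0 < ncount g z true d
      then ((1 / (ncount g z false d : ℝ)) + 1 / (ncount g z true d : ℝ))⁻¹
      else 0)
    -- the stratified naive weights
    (wstar : Fin n → (Fin n → Bool) → ℝ)
    (hws : ∀ i z, wstar i z =
      (Cd z (trDeg g z i) / ∑ d ∈ Finset.range n, Cd z d) *
        ((if z i then (2 : ℝ) else 0) - 1) / (ncount g z (z i) (trDeg g z i) : ℝ)) :
    ((∀ i : Fin n,
        (∑ z, p z * wstar i z * (if z i then (1 : ℝ) else 0)) = 1 / (n : ℝ) ∧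
        (∑ z, p z * wstar i z) = 0 ∧
        (∀ d : ℕ, 1 ≤ d →
          (∑ z, p z * wstar i z * (if trDeg g z i = d then (1 : ℝ) else 0)) = 0)) ∧
      (∀ w : Fin n → (Fin n → Bool) → ℝ,
        (∀ i : Fin n,
          (∑ z, p z * w i z * (if z i then (1 : ℝ) else 0)) = 1 / (n : ℝ) ∧
          (∑ z, p z * w i z) = 0 ∧
          (∀ d : ℕ, 1 ≤ d →
            (∑ z, p z * w i z * (if trDeg g z i = d then (1 : ℝ) else 0)) = 0)) →
        (∑ z, p z * ∑ i, ∑ j, wstar i z * wstar j z * Sig z i j) ≤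
          (∑ z, p z * ∑ i, ∑ j, w i z * w j z * Sig z i j))) :=
  stmt_17_general n hn g hloop hvt p hp0 hp1 hpaut hpbal σαα σαβ σββ σαΓ σβΓ σΓΓ hΓΓsym hΓ0 hPSD Sig
    hSig Cd hCd wstar hws
end

section
/- Let g be a vertex-transitive finite simple graph on [n] with automorphism group T, and fix an allocation z* ∈ {0,1}^n. Let τ be drawn uniformly at random from T and set z^{obs} = τ·z*, where (τ·z*)_i = z*_{τ^{-1}(i)}. Then for every unit i, every a ∈ {0,1}, and every d: Pr[z^{obs}_i = a and d_i^{z^{obs}} = d] = n_{a,d}(z*)/n, where n_{a,d}(z*) = |{j ∈ [n] : z*_j = a and d_j^{z*} = d}| and d_j^{z} = ∑_k g_{kj} z_k is the treated degree of unit j under allocation z (so the number of neighbors of j assigned 1 by z). -/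
/-!
If `H` acts transitively on `X`, then `g ↦ g⁻¹ • x` pushes the uniform measure on `H` to the uniform
measure on `X`: the count `#{g ∈ H | P (g⁻¹ • x)}` does not depend on `x` (translate `g` by an element
of `H`), and summing it over `x` counts the pairs `(g, y)` with `P (g⁻¹ • y)`, which is
`#{y | P y} * #H`. An automorphism `τ` transports treated degrees,
`trDeg g (τ · z) i = trDeg g z (τ⁻¹ i)`, so the exposure of unit `i` under `τ · z*` is the exposure
of unit `τ⁻¹ i` under `z*`, and the theorem is the case `H = Aut g`, `X = [n]`, `x = i`.
-/

open Finset
open scoped Classical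

/-- The action of an automorphism on an allocation: `(τ·z)ᵢ = z_{τ⁻¹(i)}`. -/
def actAlloc {n : ℕ} (τ : Equiv.Perm (Fin n)) (z : Fin n → Bool) : Fin n → Bool :=
  fun i => z (τ.symm i)

namespace Subgroup

variable {G X : Type*} [Group G] [Fintype G] [MulAction G X]
  (H : Subgroup G) [DecidablePred (· ∈ H)] (P : X → Prop) [DecidablePred P]

lemma card_filter_inv_smul_smul {h : G} (hh : h ∈ H) (x : X) :
    #{g | g ∈ H ∧ P (g⁻¹ • h • x)} = #{g | g ∈ H ∧ P (g⁻¹ • x)} :=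
  card_equiv (Equiv.mulLeft h⁻¹) fun g => by
    simp [mul_smul, H.mul_mem_cancel_left (H.inv_mem hh)]

lemma card_filter_inv_smul_mul_card [Fintype X] (htrans : ∀ x y : X, ∃ h ∈ H, h • x = y) (x : X) :
    #{g | g ∈ H ∧ P (g⁻¹ • x)} * Fintype.card X = #{y | P y} * #{g | g ∈ H} := by
  have hconst : ∀ y, #{g | g ∈ H ∧ P (g⁻¹ • y)} = #{g | g ∈ H ∧ P (g⁻¹ • x)} := fun y => by
    obtain ⟨h, hh, rfl⟩ := htrans x y
    exact H.card_filter_inv_smul_smul P hh x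
  have htranslate : ∀ g : G, #{y | P (g⁻¹ • y)} = #{y | P y} := fun g =>
    card_equiv (MulAction.toPerm g⁻¹) fun y => by simp
  calc #{g | g ∈ H ∧ P (g⁻¹ • x)} * Fintype.card X
      = ∑ y, #{g ∈ {g | g ∈ H} | P (g⁻¹ • y)} := by
        simp [filter_filter, hconst, mul_comm]
    _ = ∑ g ∈ {g | g ∈ H}, #{y | P (g⁻¹ • y)} :=
        (sum_card_bipartiteAbove_eq_sum_card_bipartiteBelow _).symm
    _ = #{y | P y} * #{g | g ∈ H} := by simp [htranslate, mul_comm]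

end Subgroup

section Automorphism

variable {n : ℕ} (g : Fin n → Fin n → Bool)

def autGroup : Subgroup (Equiv.Perm (Fin n)) where
  carrier := {τ | IsAut g τ}
  one_mem' _ _ := rfl
  mul_mem' hσ hτ a b := (hτ a b).trans (hσ _ _)
  inv_mem' {τ} hτ a b := by simpa using (hτ (τ⁻¹ a) (τ⁻¹ b)).symm

lemma mem_autGroup {τ : Equiv.Perm (Fin n)} : τ ∈ autGroup g ↔ IsAut g τ := Iff.rfl

lemma trDeg_actAlloc {τ : Equiv.Perm (Fin n)} (hτ : τ ∈ autGroup g) (z : Fin n → Bool)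
    (i : Fin n) : trDeg g (actAlloc τ z) i = trDeg g z (τ⁻¹ i) := by
  unfold trDeg
  refine card_equiv τ⁻¹ fun j => ?_
  rw [mem_filter, mem_filter]
  simp only [mem_univ, true_and, actAlloc, ← Equiv.Perm.inv_def,
    ← (autGroup g).inv_mem hτ j i]

end Automorphism

theorem stmt_19_general (n : ℕ)
    (g : Fin n → Fin n → Bool)
    (hvt : ∀ i j : Fin n, ∃ τ : Equiv.Perm (Fin n), IsAut g τ ∧ τ i = j)
    (zstar : Fin n → Bool) (i : Fin n) (a : Bool) (d : ℕ) :
    ((Finset.univ.filter fun τ : Equiv.Perm (Fin n) =>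
        IsAut g τ ∧ actAlloc τ zstar i = a ∧ trDeg g (actAlloc τ zstar) i = d).card : ℝ) /
      ((Finset.univ.filter fun τ : Equiv.Perm (Fin n) => IsAut g τ).card : ℝ)
    = ((Finset.univ.filter fun j : Fin n =>
        zstar j = a ∧ trDeg g zstar j = d).card : ℝ) / (n : ℝ) := by
  have hobs : ∀ τ : Equiv.Perm (Fin n), (IsAut g τ ∧ actAlloc τ zstar i = a ∧
      trDeg g (actAlloc τ zstar) i = d) ↔
        (IsAut g τ ∧ zstar (τ⁻¹ • i) = a ∧ trDeg g zstar (τ⁻¹ • i) = d) := fun τ =>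
    and_congr_right fun hτ => by rw [trDeg_actAlloc g hτ]; rfl
  have hcount := (autGroup g).card_filter_inv_smul_mul_card
    (fun j => zstar j = a ∧ trDeg g zstar j = d) hvt i
  simp only [mem_autGroup, Fintype.card_fin] at hcount
  have hn : (n : ℝ) ≠ 0 := Nat.cast_ne_zero.mpr (Fin.pos i).ne'
  have hT : (#{τ | IsAut g τ} : ℝ) ≠ 0 :=
    Nat.cast_ne_zero.mpr (card_ne_zero_of_mem (mem_filter.mpr ⟨mem_univ 1, fun _ _ => rfl⟩))
  rw [div_eq_div_iff hT hn, filter_congr fun τ _ => hobs τ]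
  exact_mod_cast hcount

/-- for a vertex-transitive finite simple graph `g` and a fixed
allocation `z*`, if `τ` is drawn uniformly from the automorphism group of `g` and
`z^{obs} = τ·z*`, then for every unit `i`, `a ∈ {0,1}` and `d`,
`Pr[z^{obs}ᵢ = a ∧ dᵢ^{z^{obs}} = d] = n_{a,d}(z*)/n`. -/
theorem stmt_19 (n : ℕ) (hn : 1 ≤ n)
    (g : Fin n → Fin n → Bool)
    (hsym : ∀ i j, g i j = g j i) (hloop : ∀ i, g i i = false)
    (hvt : ∀ i j : Fin n, ∃ τ : Equiv.Perm (Fin n), IsAut g τ ∧ τ i = j)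
    (zstar : Fin n → Bool) (i : Fin n) (a : Bool) (d : ℕ) :
    ((Finset.univ.filter fun τ : Equiv.Perm (Fin n) =>
        IsAut g τ ∧ actAlloc τ zstar i = a ∧ trDeg g (actAlloc τ zstar) i = d).card : ℝ) /
      ((Finset.univ.filter fun τ : Equiv.Perm (Fin n) => IsAut g τ).card : ℝ)
    = ((Finset.univ.filter fun j : Fin n =>
        zstar j = a ∧ trDeg g zstar j = d).card : ℝ) / (n : ℝ) :=
  stmt_19_general n g hvt zstar i a d
end
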